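/- arXiv:1306.6377 — 9 statements merged into one kernel-verified Lean document; each statement's English description precedes it below -/
import Mathlib

section
/- On the open set U ⊆ ℝ^N × ℝ^M consisting of all points (x, y) with x_l ≠ y_s for all 1 ≤ l ≤ N, 1 ≤ s ≤ M and y_m ≠ y_s for all m ≠ s, the wave function Ψ is infinitely differentiable and satisfies the free Schrödinger eigenvalue equation −(Σ_{n=1}^{N} ∂²Ψ/∂x_n² + Σ_{m=1}^{M} ∂²Ψ/∂y_m²) = (Σ_{j=1}^{N+M} k_j²)·Ψ at every point of U. -/
open Complex Finset Function

/-- The factor `A_j(Λ, t) = i(k_j − Λ) + c·sgn(t)`. -/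
noncomputable def Acoef (c kj lam t : ℝ) : ℂ :=
  Complex.I * ((kj : ℂ) - (lam : ℂ)) + (c : ℂ) * ((Real.sign t : ℝ) : ℂ)

/-- The (N+M)×(N+M) matrix whose determinant is `Φ_R(x, y)`. -/
noncomputable def PhiMat (N M : ℕ) (c : ℝ) (k : Fin (N + M) → ℝ) (Λ : Fin M → ℝ)
    (R : Equiv.Perm (Fin M)) (x : Fin N → ℝ) (y : Fin M → ℝ) :
    Matrix (Fin (N + M)) (Fin (N + M)) ℂ :=
  fun j col =>
    match finSumFinEquiv.symm col with
    | Sum.inl l =>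
        (∏ s : Fin M, Acoef c (k j) (Λ (R s)) (x l - y s)) *
          Complex.exp (Complex.I * ((k j : ℂ)) * ((x l : ℝ) : ℂ))
    | Sum.inr m =>
        (∏ s ∈ Finset.univ.erase m, Acoef c (k j) (Λ (R s)) (y m - y s)) *
          Complex.exp (Complex.I * ((k j : ℂ)) * ((y m : ℝ) : ℂ))

/-- The determinantal Bethe-ansatz wave function `Ψ(x, y)`. -/
noncomputable def Psi (N M : ℕ) (c : ℝ) (k : Fin (N + M) → ℝ) (Λ : Fin M → ℝ)
    (x : Fin N → ℝ) (y : Fin M → ℝ) : ℂ :=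
  ∑ R : Equiv.Perm (Fin M),
    ((Equiv.Perm.sign R : ℤ) : ℂ) *
      (∏ p ∈ Finset.univ.filter (fun p : Fin M × Fin M => p.1 < p.2),
        (Complex.I * ((Λ (R p.1) : ℂ) - (Λ (R p.2) : ℂ)) +
          2 * (c : ℂ) * ((Real.sign (y p.2 - y p.1) : ℝ) : ℂ))) *
      (PhiMat N M c k Λ R x y).det

/-! ### Auxiliary definitions: frozen-sign versions -/

noncomputable def AcoefF (c kj lam s : ℝ) : ℂ :=
  Complex.I * ((kj : ℂ) - (lam : ℂ)) + (c : ℂ) * ((s : ℝ) : ℂ)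

noncomputable def PhiMatF (N M : ℕ) (c : ℝ) (k : Fin (N + M) → ℝ) (Λ : Fin M → ℝ)
    (R : Equiv.Perm (Fin M)) (sx : Fin N → Fin M → ℝ) (sy : Fin M → Fin M → ℝ)
    (x : Fin N → ℝ) (y : Fin M → ℝ) : Matrix (Fin (N + M)) (Fin (N + M)) ℂ :=
  fun j col =>
    Sum.elim
      (fun l => (∏ s : Fin M, AcoefF c (k j) (Λ (R s)) (sx l s)) *
          Complex.exp (Complex.I * ((k j : ℂ)) * ((x l : ℝ) : ℂ)))
      (fun m => (∏ s ∈ Finset.univ.erase m, AcoefF c (k j) (Λ (R s)) (sy m s)) *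
          Complex.exp (Complex.I * ((k j : ℂ)) * ((y m : ℝ) : ℂ)))
      (finSumFinEquiv.symm col)

noncomputable def Cpref (M : ℕ) (c : ℝ) (Λ : Fin M → ℝ) (R : Equiv.Perm (Fin M))
    (sy : Fin M → Fin M → ℝ) : ℂ :=
  ((Equiv.Perm.sign R : ℤ) : ℂ) *
    ∏ p ∈ Finset.univ.filter (fun p : Fin M × Fin M => p.1 < p.2),
      (Complex.I * ((Λ (R p.1) : ℂ) - (Λ (R p.2) : ℂ)) +
        2 * (c : ℂ) * ((sy p.2 p.1 : ℝ) : ℂ))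

noncomputable def PsiE (N M : ℕ) (c : ℝ) (k : Fin (N + M) → ℝ) (Λ : Fin M → ℝ)
    (sx : Fin N → Fin M → ℝ) (sy : Fin M → Fin M → ℝ)
    (x : Fin N → ℝ) (y : Fin M → ℝ) : ℂ :=
  ∑ q : Equiv.Perm (Fin M) × Equiv.Perm (Fin (N + M)),
    Cpref M c Λ q.1 sy * ((Equiv.Perm.sign q.2 : ℤ) : ℂ) *
      ∏ col, PhiMatF N M c k Λ q.1 sx sy x y (q.2 col) col

lemma PhiMat_eq_PhiMatF (N M : ℕ) (c : ℝ) (k : Fin (N + M) → ℝ) (Λ : Fin M → ℝ)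
    (R : Equiv.Perm (Fin M)) (x : Fin N → ℝ) (y : Fin M → ℝ) :
    PhiMat N M c k Λ R x y =
      PhiMatF N M c k Λ R (fun l s => Real.sign (x l - y s))
        (fun m s => Real.sign (y m - y s)) x y := by
  funext j col
  unfold PhiMat PhiMatF Acoef AcoefF
  rcases h : finSumFinEquiv.symm col with l | m <;> simp

lemma Psi_eq_PsiE (N M : ℕ) (c : ℝ) (k : Fin (N + M) → ℝ) (Λ : Fin M → ℝ)
    (x : Fin N → ℝ) (y : Fin M → ℝ) :
    Psi N M c k Λ x y =
      PsiE N M c k Λ (fun l s => Real.sign (x l - y s))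
        (fun m s => Real.sign (y m - y s)) x y := by
  unfold Psi PsiE Cpref
  rw [Fintype.sum_prod_type]
  refine Finset.sum_congr rfl fun R _ => ?_
  rw [PhiMat_eq_PhiMatF, Matrix.det_apply', Finset.mul_sum]
  refine Finset.sum_congr rfl fun σ _ => ?_
  ring


/-! ### Local constancy of sign -/

lemma sign_eventually_eq {t : ℝ} (h : t ≠ 0) :
    ∀ᶠ u in nhds t, Real.sign u = Real.sign t := by
  rcases h.lt_or_gt with h | h
  · filter_upwards [eventually_lt_nhds h] with u hu
    rw [Real.sign_of_neg hu, Real.sign_of_neg h]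
  · filter_upwards [eventually_gt_nhds h] with u hu
    rw [Real.sign_of_pos hu, Real.sign_of_pos h]

lemma eventually_signs (N M : ℕ) (x₀ : Fin N → ℝ) (y₀ : Fin M → ℝ)
    (h1 : ∀ l s, x₀ l ≠ y₀ s) (h2 : ∀ m s, m ≠ s → y₀ m ≠ y₀ s) :
    ∀ᶠ p : (Fin N → ℝ) × (Fin M → ℝ) in nhds (x₀, y₀),
      (∀ l s, Real.sign (p.1 l - p.2 s) = Real.sign (x₀ l - y₀ s)) ∧
      (∀ m s, Real.sign (p.2 m - p.2 s) = Real.sign (y₀ m - y₀ s)) := by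
  refine Filter.Eventually.and ?_ ?_
  · rw [Filter.eventually_all]
    intro l
    rw [Filter.eventually_all]
    intro s
    have hc : Continuous fun p : (Fin N → ℝ) × (Fin M → ℝ) => p.1 l - p.2 s := by fun_prop
    exact (hc.tendsto (x₀, y₀)).eventually (sign_eventually_eq (sub_ne_zero.2 (h1 l s)))
  · rw [Filter.eventually_all]
    intro m
    rw [Filter.eventually_all]
    intro s
    by_cases hms : m = s
    · subst hms; simp
    · have hc : Continuous fun p : (Fin N → ℝ) × (Fin M → ℝ) => p.2 m - p.2 s := by fun_prop
      exact (hc.tendsto (x₀, y₀)).eventually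
        (sign_eventually_eq (sub_ne_zero.2 (h2 m s hms)))

lemma psi_eventuallyEq (N M : ℕ) (c : ℝ) (k : Fin (N + M) → ℝ) (Λ : Fin M → ℝ)
    (x₀ : Fin N → ℝ) (y₀ : Fin M → ℝ)
    (h1 : ∀ l s, x₀ l ≠ y₀ s) (h2 : ∀ m s, m ≠ s → y₀ m ≠ y₀ s) :
    (fun p : (Fin N → ℝ) × (Fin M → ℝ) => Psi N M c k Λ p.1 p.2) =ᶠ[nhds (x₀, y₀)]
      (fun p => PsiE N M c k Λ (fun l s => Real.sign (x₀ l - y₀ s))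
        (fun m s => Real.sign (y₀ m - y₀ s)) p.1 p.2) := by
  filter_upwards [eventually_signs N M x₀ y₀ h1 h2] with p hp
  rw [Psi_eq_PsiE,
    show (fun l s => Real.sign (p.1 l - p.2 s)) = fun l s => Real.sign (x₀ l - y₀ s) from
      funext fun l => funext fun s => hp.1 l s,
    show (fun m s => Real.sign (p.2 m - p.2 s)) = fun m s => Real.sign (y₀ m - y₀ s) from
      funext fun m => funext fun s => hp.2 m s]

/-! ### Smoothness of the frozen wave function -/

lemma contDiff_PsiE (N M : ℕ) (c : ℝ) (k : Fin (N + M) → ℝ) (Λ : Fin M → ℝ)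
    (sx : Fin N → Fin M → ℝ) (sy : Fin M → Fin M → ℝ) :
    ContDiff ℝ (⊤ : ℕ∞) (fun p : (Fin N → ℝ) × (Fin M → ℝ) =>
      PsiE N M c k Λ sx sy p.1 p.2) := by
  unfold PsiE
  refine ContDiff.sum fun q _ => ContDiff.mul contDiff_const (contDiff_prod fun col _ => ?_)
  unfold PhiMatF
  rcases h : finSumFinEquiv.symm col with l | m <;>
    simp only [h, Sum.elim_inl, Sum.elim_inr] <;>
    exact ContDiff.mul contDiff_const (Complex.contDiff_exp.comp (ContDiff.mul contDiff_const
      (Complex.ofRealCLM.contDiff.comp (by fun_prop))))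


/-! ### Plane-wave derivatives -/

lemma hasDerivAt_cexp_mul (a : ℂ) (K : ℝ) (t : ℝ) :
    HasDerivAt (fun u : ℝ => a * Complex.exp (Complex.I * (K : ℂ) * (u : ℂ)))
      (Complex.I * (K : ℂ) * a * Complex.exp (Complex.I * (K : ℂ) * (t : ℂ))) t := by
  have h0 : HasDerivAt (fun u : ℝ => Complex.I * (K : ℂ) * (u : ℂ))
      (Complex.I * (K : ℂ)) t := by
    simpa using (Complex.ofRealCLM.hasDerivAt (x := t)).const_mul (Complex.I * (K : ℂ))
  have h2 := h0.cexp.const_mul a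
  exact h2.congr_deriv (by ring)

lemma deriv2_sum_cexp {ι : Type*} [Fintype ι] (a : ι → ℂ) (K : ι → ℝ) (t₀ : ℝ) :
    deriv (deriv (fun t : ℝ => ∑ i, a i * Complex.exp (Complex.I * (K i : ℂ) * (t : ℂ)))) t₀
      = ∑ i, (-((K i : ℂ)) ^ 2) * (a i * Complex.exp (Complex.I * (K i : ℂ) * (t₀ : ℂ))) := by
  have hd : deriv (fun t : ℝ => ∑ i, a i * Complex.exp (Complex.I * (K i : ℂ) * (t : ℂ)))
      = fun t : ℝ => ∑ i, (Complex.I * (K i : ℂ) * a i) *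
          Complex.exp (Complex.I * (K i : ℂ) * (t : ℂ)) :=
    funext fun t => (HasDerivAt.fun_sum fun i _ => hasDerivAt_cexp_mul (a i) (K i) t).deriv
  rw [hd, (HasDerivAt.fun_sum fun i _ =>
    hasDerivAt_cexp_mul (Complex.I * (K i : ℂ) * a i) (K i) t₀).deriv]
  refine Finset.sum_congr rfl fun i _ => ?_
  linear_combination ((K i : ℂ)) ^ 2 * a i *
    Complex.exp (Complex.I * (K i : ℂ) * (t₀ : ℂ)) * Complex.I_sq

/-! ### Derivatives of PsiE -/

section derivs

variable (N M : ℕ) (c : ℝ) (k : Fin (N + M) → ℝ) (Λ : Fin M → ℝ)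
  (R : Equiv.Perm (Fin M)) (σ : Equiv.Perm (Fin (N + M)))
  (sx : Fin N → Fin M → ℝ) (sy : Fin M → Fin M → ℝ)
  (x : Fin N → ℝ) (y : Fin M → ℝ)

lemma entry_update_x (n : Fin N) (t : ℝ) (j col : Fin (N + M))
    (hcol : col ≠ finSumFinEquiv (Sum.inl n)) :
    PhiMatF N M c k Λ R sx sy (Function.update x n t) y j col
      = PhiMatF N M c k Λ R sx sy x y j col := by
  unfold PhiMatF
  rcases h : finSumFinEquiv.symm col with l | m
  · have hln : l ≠ n := by
      rintro rfl
      exact hcol (by rw [← finSumFinEquiv.apply_symm_apply col, h])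
    simp [h, Function.update_of_ne hln]
  · simp [h]

lemma entry_update_y (m : Fin M) (t : ℝ) (j col : Fin (N + M))
    (hcol : col ≠ finSumFinEquiv (Sum.inr m)) :
    PhiMatF N M c k Λ R sx sy x (Function.update y m t) j col
      = PhiMatF N M c k Λ R sx sy x y j col := by
  unfold PhiMatF
  rcases h : finSumFinEquiv.symm col with l | m'
  · simp [h]
  · have hmm : m' ≠ m := by
      rintro rfl
      exact hcol (by rw [← finSumFinEquiv.apply_symm_apply col, h])
    simp [h, Function.update_of_ne hmm]

lemma prod_update_x (n : Fin N) (t : ℝ) :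
    (∏ col, PhiMatF N M c k Λ R sx sy (Function.update x n t) y (σ col) col)
      = ((∏ s, AcoefF c (k (σ (finSumFinEquiv (Sum.inl n)))) (Λ (R s)) (sx n s)) *
          ∏ col ∈ Finset.univ.erase (finSumFinEquiv (Sum.inl n)),
            PhiMatF N M c k Λ R sx sy x y (σ col) col) *
        Complex.exp (Complex.I * ((k (σ (finSumFinEquiv (Sum.inl n)))) : ℂ) * (t : ℂ)) := by
  set col₀ := finSumFinEquiv (Sum.inl n) with hc0
  rw [← Finset.mul_prod_erase Finset.univ _ (Finset.mem_univ col₀)]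
  have h0 : finSumFinEquiv.symm col₀ = Sum.inl n := Equiv.symm_apply_apply _ _
  have he : PhiMatF N M c k Λ R sx sy (Function.update x n t) y (σ col₀) col₀
      = (∏ s, AcoefF c (k (σ col₀)) (Λ (R s)) (sx n s)) *
          Complex.exp (Complex.I * ((k (σ col₀)) : ℂ) * (t : ℂ)) := by
    unfold PhiMatF
    simp [h0]
  rw [he, Finset.prod_congr rfl fun col hcol =>
    entry_update_x N M c k Λ R sx sy x y n t (σ col) col (Finset.ne_of_mem_erase hcol)]
  ring

lemma prod_update_y (m : Fin M) (t : ℝ) :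
    (∏ col, PhiMatF N M c k Λ R sx sy x (Function.update y m t) (σ col) col)
      = ((∏ s ∈ Finset.univ.erase m,
            AcoefF c (k (σ (finSumFinEquiv (Sum.inr m)))) (Λ (R s)) (sy m s)) *
          ∏ col ∈ Finset.univ.erase (finSumFinEquiv (Sum.inr m)),
            PhiMatF N M c k Λ R sx sy x y (σ col) col) *
        Complex.exp (Complex.I * ((k (σ (finSumFinEquiv (Sum.inr m)))) : ℂ) * (t : ℂ)) := by
  set col₀ := finSumFinEquiv (Sum.inr m) with hc0
  rw [← Finset.mul_prod_erase Finset.univ _ (Finset.mem_univ col₀)]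
  have h0 : finSumFinEquiv.symm col₀ = Sum.inr m := Equiv.symm_apply_apply _ _
  have he : PhiMatF N M c k Λ R sx sy x (Function.update y m t) (σ col₀) col₀
      = (∏ s ∈ Finset.univ.erase m, AcoefF c (k (σ col₀)) (Λ (R s)) (sy m s)) *
          Complex.exp (Complex.I * ((k (σ col₀)) : ℂ) * (t : ℂ)) := by
    unfold PhiMatF
    have : ∀ s ∈ Finset.univ.erase m,
        AcoefF c (k (σ col₀)) (Λ (R s)) (sy m s) = AcoefF c (k (σ col₀)) (Λ (R s)) (sy m s) :=
      fun _ _ => rfl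
    simp [h0]
  rw [he, Finset.prod_congr rfl fun col hcol =>
    entry_update_y N M c k Λ R sx sy x y m t (σ col) col (Finset.ne_of_mem_erase hcol)]
  ring

end derivs


section derivs2

variable (N M : ℕ) (c : ℝ) (k : Fin (N + M) → ℝ) (Λ : Fin M → ℝ)
  (sx : Fin N → Fin M → ℝ) (sy : Fin M → Fin M → ℝ)
  (x : Fin N → ℝ) (y : Fin M → ℝ)

lemma deriv2_PsiE_x (n : Fin N) :
    deriv (deriv (fun t : ℝ => PsiE N M c k Λ sx sy (Function.update x n t) y)) (x n)
      = ∑ q : Equiv.Perm (Fin M) × Equiv.Perm (Fin (N + M)),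
          (-((k (q.2 (finSumFinEquiv (Sum.inl n))) : ℂ)) ^ 2) *
            (Cpref M c Λ q.1 sy * ((Equiv.Perm.sign q.2 : ℤ) : ℂ) *
              ∏ col, PhiMatF N M c k Λ q.1 sx sy x y (q.2 col) col) := by
  have hfun : (fun t : ℝ => PsiE N M c k Λ sx sy (Function.update x n t) y)
      = fun t : ℝ => ∑ q : Equiv.Perm (Fin M) × Equiv.Perm (Fin (N + M)),
          (Cpref M c Λ q.1 sy * ((Equiv.Perm.sign q.2 : ℤ) : ℂ) *
            ((∏ s, AcoefF c (k (q.2 (finSumFinEquiv (Sum.inl n)))) (Λ (q.1 s)) (sx n s)) *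
              ∏ col ∈ Finset.univ.erase (finSumFinEquiv (Sum.inl n)),
                PhiMatF N M c k Λ q.1 sx sy x y (q.2 col) col)) *
            Complex.exp (Complex.I * ((k (q.2 (finSumFinEquiv (Sum.inl n)))) : ℂ) * (t : ℂ)) := by
    funext t
    unfold PsiE
    refine Finset.sum_congr rfl fun q _ => ?_
    rw [prod_update_x N M c k Λ q.1 q.2 sx sy x y n t]
    ring
  rw [hfun, deriv2_sum_cexp]
  refine Finset.sum_congr rfl fun q _ => ?_
  have hp := prod_update_x N M c k Λ q.1 q.2 sx sy x y n (x n)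
  rw [Function.update_eq_self] at hp
  rw [hp]
  ring

lemma deriv2_PsiE_y (m : Fin M) :
    deriv (deriv (fun t : ℝ => PsiE N M c k Λ sx sy x (Function.update y m t))) (y m)
      = ∑ q : Equiv.Perm (Fin M) × Equiv.Perm (Fin (N + M)),
          (-((k (q.2 (finSumFinEquiv (Sum.inr m))) : ℂ)) ^ 2) *
            (Cpref M c Λ q.1 sy * ((Equiv.Perm.sign q.2 : ℤ) : ℂ) *
              ∏ col, PhiMatF N M c k Λ q.1 sx sy x y (q.2 col) col) := by
  have hfun : (fun t : ℝ => PsiE N M c k Λ sx sy x (Function.update y m t))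
      = fun t : ℝ => ∑ q : Equiv.Perm (Fin M) × Equiv.Perm (Fin (N + M)),
          (Cpref M c Λ q.1 sy * ((Equiv.Perm.sign q.2 : ℤ) : ℂ) *
            ((∏ s ∈ Finset.univ.erase m,
                AcoefF c (k (q.2 (finSumFinEquiv (Sum.inr m)))) (Λ (q.1 s)) (sy m s)) *
              ∏ col ∈ Finset.univ.erase (finSumFinEquiv (Sum.inr m)),
                PhiMatF N M c k Λ q.1 sx sy x y (q.2 col) col)) *
            Complex.exp (Complex.I * ((k (q.2 (finSumFinEquiv (Sum.inr m)))) : ℂ) * (t : ℂ)) := by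
    funext t
    unfold PsiE
    refine Finset.sum_congr rfl fun q _ => ?_
    rw [prod_update_y N M c k Λ q.1 q.2 sx sy x y m t]
    ring
  rw [hfun, deriv2_sum_cexp]
  refine Finset.sum_congr rfl fun q _ => ?_
  have hp := prod_update_y N M c k Λ q.1 q.2 sx sy x y m (y m)
  rw [Function.update_eq_self] at hp
  rw [hp]
  ring

lemma pde_PsiE :
    -((∑ n : Fin N,
          deriv (deriv (fun t : ℝ => PsiE N M c k Λ sx sy (Function.update x n t) y)) (x n)) +
      (∑ m : Fin M,
          deriv (deriv (fun t : ℝ => PsiE N M c k Λ sx sy x (Function.update y m t))) (y m)))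
      = (∑ j : Fin (N + M), ((k j : ℂ)) ^ 2) * PsiE N M c k Λ sx sy x y := by
  rw [Finset.sum_congr rfl fun n _ => deriv2_PsiE_x N M c k Λ sx sy x y n,
    Finset.sum_congr rfl fun m _ => deriv2_PsiE_y N M c k Λ sx sy x y m,
    Finset.sum_comm, Finset.sum_comm
      (s := (Finset.univ : Finset (Fin M)))
      (t := (Finset.univ : Finset (Equiv.Perm (Fin M) × Equiv.Perm (Fin (N + M)))))]
  unfold PsiE
  rw [Finset.mul_sum, ← Finset.sum_add_distrib, ← neg_one_mul, Finset.mul_sum]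
  refine Finset.sum_congr rfl fun q _ => ?_
  have hk : (∑ n : Fin N, ((k (q.2 (finSumFinEquiv (Sum.inl n))) : ℂ)) ^ 2) +
      (∑ m : Fin M, ((k (q.2 (finSumFinEquiv (Sum.inr m))) : ℂ)) ^ 2)
      = ∑ j : Fin (N + M), ((k j : ℂ)) ^ 2 := by
    rw [← Fintype.sum_sum_type (fun d : Fin N ⊕ Fin M =>
        ((k (q.2 (finSumFinEquiv d)) : ℂ)) ^ 2),
      Equiv.sum_comp finSumFinEquiv (fun col => ((k (q.2 col) : ℂ)) ^ 2),
      Equiv.sum_comp q.2 (fun j => ((k j : ℂ)) ^ 2)]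
  rw [← hk, add_mul, Finset.sum_mul, Finset.sum_mul, neg_one_mul, neg_add,
    ← Finset.sum_neg_distrib, ← Finset.sum_neg_distrib]
  exact congrArg₂ (· + ·) (Finset.sum_congr rfl fun i _ => by ring)
    (Finset.sum_congr rfl fun i _ => by ring)

end derivs2


section transfer

variable (N M : ℕ) (c : ℝ) (k : Fin (N + M) → ℝ) (Λ : Fin M → ℝ)
  (x : Fin N → ℝ) (y : Fin M → ℝ)

lemma deriv_transfer_x (h1 : ∀ l s, x l ≠ y s) (h2 : ∀ m s, m ≠ s → y m ≠ y s) (n : Fin N) :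
    deriv (deriv (fun t : ℝ => Psi N M c k Λ (Function.update x n t) y)) (x n)
      = deriv (deriv (fun t : ℝ => PsiE N M c k Λ (fun l s => Real.sign (x l - y s))
          (fun m s => Real.sign (y m - y s)) (Function.update x n t) y)) (x n) := by
  have hcont : Continuous fun t : ℝ => (Function.update x n t, y) := by
    refine Continuous.prodMk (continuous_pi fun i => ?_) continuous_const
    by_cases hin : i = n
    · subst hin
      simp only [Function.update_self]
      exact continuous_id
    · simp only [Function.update_of_ne hin]
      exact continuous_const
  have htend : Filter.Tendsto (fun t : ℝ => (Function.update x n t, y))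
      (nhds (x n)) (nhds (x, y)) := by
    have := hcont.tendsto (x n)
    rwa [Function.update_eq_self] at this
  have hev := (psi_eventuallyEq N M c k Λ x y h1 h2).comp_tendsto htend
  exact hev.deriv.deriv_eq

lemma deriv_transfer_y (h1 : ∀ l s, x l ≠ y s) (h2 : ∀ m s, m ≠ s → y m ≠ y s) (m : Fin M) :
    deriv (deriv (fun t : ℝ => Psi N M c k Λ x (Function.update y m t))) (y m)
      = deriv (deriv (fun t : ℝ => PsiE N M c k Λ (fun l s => Real.sign (x l - y s))
          (fun m s => Real.sign (y m - y s)) x (Function.update y m t))) (y m) := by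
  have hcont : Continuous fun t : ℝ => (x, Function.update y m t) := by
    refine Continuous.prodMk continuous_const (continuous_pi fun i => ?_)
    by_cases him : i = m
    · subst him
      simp only [Function.update_self]
      exact continuous_id
    · simp only [Function.update_of_ne him]
      exact continuous_const
  have htend : Filter.Tendsto (fun t : ℝ => (x, Function.update y m t))
      (nhds (y m)) (nhds (x, y)) := by
    have := hcont.tendsto (y m)
    rwa [Function.update_eq_self] at this
  have hev := (psi_eventuallyEq N M c k Λ x y h1 h2).comp_tendsto htend
  exact hev.deriv.deriv_eq

end transfer

/-- On the open set `U` where no spin-down coordinate coincides with a spin-up coordinate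
and the spin-up coordinates are pairwise distinct, `Ψ` is infinitely differentiable and
satisfies the free Schrödinger eigenvalue equation
`−(Σ_n ∂²Ψ/∂x_n² + Σ_m ∂²Ψ/∂y_m²) = (Σ_j k_j²)·Ψ`. -/
theorem psi_contDiff_and_schrodinger (N M : ℕ) (hM : 1 ≤ M) (c : ℝ)
    (k : Fin (N + M) → ℝ) (Λ : Fin M → ℝ) :
    ContDiffOn ℝ (⊤ : ℕ∞)
      (fun p : (Fin N → ℝ) × (Fin M → ℝ) => Psi N M c k Λ p.1 p.2)
      {p : (Fin N → ℝ) × (Fin M → ℝ) |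
        (∀ l s, p.1 l ≠ p.2 s) ∧ (∀ m s, m ≠ s → p.2 m ≠ p.2 s)} ∧
    ∀ x : Fin N → ℝ, ∀ y : Fin M → ℝ,
      (∀ l s, x l ≠ y s) → (∀ m s, m ≠ s → y m ≠ y s) →
      -((∑ n : Fin N,
            deriv (deriv (fun t : ℝ => Psi N M c k Λ (Function.update x n t) y)) (x n)) +
        (∑ m : Fin M,
            deriv (deriv (fun t : ℝ => Psi N M c k Λ x (Function.update y m t))) (y m)))
        = (∑ j : Fin (N + M), ((k j : ℂ)) ^ 2) * Psi N M c k Λ x y := by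
  constructor
  · intro p hp
    exact ((contDiff_PsiE N M c k Λ _ _).contDiffAt.congr_of_eventuallyEq
      (psi_eventuallyEq N M c k Λ p.1 p.2 hp.1 hp.2)).contDiffWithinAt
  · intro x y h1 h2
    rw [Finset.sum_congr rfl fun n _ => deriv_transfer_x N M c k Λ x y h1 h2 n,
      Finset.sum_congr rfl fun m _ => deriv_transfer_y N M c k Λ x y h1 h2 m,
      Psi_eq_PsiE]
    exact pde_PsiE N M c k Λ _ _ x y
end

section
/- Fix indices n ∈ {1, …, N} and m ∈ {1, …, M}, and fix all coordinates except x_n such that the coordinates y_1, …, y_M are pairwise distinct and x_l ≠ y_s for every pair (l, s) with l ≠ n. Then the one-variable function s ↦ Ψ(x_1, …, x_{n-1}, s, x_{n+1}, …, x_N, y) is continuous at s = y_m; in particular its one-sided limits as s → y_m from above and from below agree and equal its value at s = y_m. -/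
open Complex Finset Function

lemma det_key (N M : ℕ) (c : ℝ) (k : Fin (N + M) → ℝ) (Λ : Fin M → ℝ)
    (R : Equiv.Perm (Fin M)) (n : Fin N) (m : Fin M) (x : Fin N → ℝ) (y : Fin M → ℝ)
    (hy : ∀ s', s' ≠ m → y s' ≠ y m) :
    ContinuousAt (fun s : ℝ =>
      (PhiMat N M c k Λ R (Function.update x n s) y).det) (y m) := by
  set c₀ : Fin (N + M) := finSumFinEquiv (Sum.inl n) with hc₀
  set c₁ : Fin (N + M) := finSumFinEquiv (Sum.inr m) with hc₁
  have hc01 : c₀ ≠ c₁ := by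
    simp only [hc₀, hc₁, finSumFinEquiv.apply_eq_iff_eq]
    intro hcontra
    have := congrArg Fin.val hcontra
    simp [Fin.castAdd, Fin.natAdd, Fin.castLE] at this
    omega
  set Base : Matrix (Fin (N + M)) (Fin (N + M)) ℂ :=
    PhiMat N M c k Λ R (Function.update x n (y m)) y with hBase
  set h : ℝ → Fin (N + M) → ℂ := fun s j =>
    (∏ s' ∈ Finset.univ.erase m, Acoef c (k j) (Λ (R s')) (s - y s')) *
      Complex.exp (Complex.I * ((k j : ℂ)) * ((s : ℝ) : ℂ)) with hh
  set v1 : ℝ → Fin (N + M) → ℂ := fun s j =>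
    (Complex.I * ((k j : ℂ) - (Λ (R m) : ℂ))) * h s j with hv1
  set v2 : ℝ → Fin (N + M) → ℂ := fun s j => (c : ℂ) * h s j with hv2
  -- decomposition of the matrix
  have hdecomp : ∀ s : ℝ, PhiMat N M c k Λ R (Function.update x n s) y =
      Base.updateCol c₀ (fun j => v1 s j + ((Real.sign (s - y m) : ℝ) : ℂ) • v2 s j) := by
    intro s
    ext j col
    rw [Matrix.updateCol_apply]
    by_cases hcol : col = c₀
    · subst hcol
      rw [if_pos rfl]
      simp only [hc₀, PhiMat, Equiv.symm_apply_apply, hv1, hv2, hh]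
      rw [Function.update_self]
      rw [← Finset.mul_prod_erase Finset.univ _ (Finset.mem_univ m)]
      simp only [Acoef, smul_eq_mul]
      ring
    · rw [if_neg hcol]
      rcases he : finSumFinEquiv.symm col with l | m'
      · have hcoleq : col = finSumFinEquiv (Sum.inl l) := by
          rw [← he, Equiv.apply_symm_apply]
        have hl : l ≠ n := by
          rintro rfl; exact hcol (by rw [hcoleq, hc₀])
        simp only [PhiMat, hBase, he, Function.update_of_ne hl]
      · simp only [PhiMat, hBase, he]
  -- determinant decomposition
  have hdet : ∀ s : ℝ, (PhiMat N M c k Λ R (Function.update x n s) y).det =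
      (Base.updateCol c₀ (v1 s)).det +
        ((Real.sign (s - y m) : ℝ) : ℂ) * (Base.updateCol c₀ (v2 s)).det := by
    intro s
    rw [hdecomp s]
    rw [show (fun j => v1 s j + ((Real.sign (s - y m) : ℝ) : ℂ) • v2 s j) =
        (v1 s) + (((Real.sign (s - y m) : ℝ) : ℂ) • v2 s) from rfl,
      Matrix.det_updateCol_add, Matrix.det_updateCol_smul]
  -- eventual sign constancy
  have hsign : ∀ᶠ s in nhds (y m), ∀ s' ∈ Finset.univ.erase m,
      Real.sign (s - y s') = Real.sign (y m - y s') := by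
    rw [Finset.eventually_all]
    intro s' hs'
    have hne : y s' ≠ y m := hy s' (Finset.ne_of_mem_erase hs')
    rcases hne.lt_or_gt with hlt | hgt
    · filter_upwards [eventually_gt_nhds hlt] with s hs
      rw [Real.sign_of_pos (by linarith), Real.sign_of_pos (by linarith)]
    · filter_upwards [eventually_lt_nhds hgt] with s hs
      rw [Real.sign_of_neg (by linarith), Real.sign_of_neg (by linarith)]
  -- continuity of h in s, for each j
  have hhcont : ∀ j, ContinuousAt (fun s => h s j) (y m) := by
    intro j
    have hcontg : ContinuousAt (fun s : ℝ =>
        (∏ s' ∈ Finset.univ.erase m, Acoef c (k j) (Λ (R s')) (y m - y s')) *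
          Complex.exp (Complex.I * ((k j : ℂ)) * ((s : ℝ) : ℂ))) (y m) := by
      apply ContinuousAt.mul continuousAt_const
      exact (Complex.continuous_exp.comp
        (continuous_const.mul Complex.continuous_ofReal)).continuousAt
    apply hcontg.congr
    filter_upwards [hsign] with s hs
    simp only [hh]
    congr 1
    exact Finset.prod_congr rfl fun s' hs' => by rw [Acoef, Acoef, hs s' hs']
  -- continuity of the two dets
  have hdetcont : ∀ v : ℝ → Fin (N + M) → ℂ, (∀ j, ContinuousAt (fun s => v s j) (y m)) →
      ContinuousAt (fun s => (Base.updateCol c₀ (v s)).det) (y m) := by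
    intro v hv
    have hmat : ContinuousAt (fun s => Base.updateCol c₀ (v s)) (y m) := by
      apply continuousAt_pi.2
      intro j
      apply continuousAt_pi.2
      intro col
      by_cases hcol : col = c₀
      · subst hcol
        simpa [Matrix.updateCol_apply] using hv j
      · simpa [Matrix.updateCol_apply, hcol] using continuousAt_const
    exact (continuous_id.matrix_det.continuousAt).comp hmat
  have h1cont : ContinuousAt (fun s => (Base.updateCol c₀ (v1 s)).det) (y m) :=
    hdetcont v1 fun j => continuousAt_const.mul (hhcont j)
  have h2cont : ContinuousAt (fun s => (Base.updateCol c₀ (v2 s)).det) (y m) :=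
    hdetcont v2 fun j => continuousAt_const.mul (hhcont j)
  -- the second det vanishes at y m
  have h2zero : (Base.updateCol c₀ (v2 (y m))).det = 0 := by
    have hv2ym : v2 (y m) = (c : ℂ) • (fun j => Base j c₁) := by
      funext j
      simp only [hv2, hh, hBase, hc₁, PhiMat, Equiv.symm_apply_apply, Pi.smul_apply,
        smul_eq_mul]
    rw [hv2ym, Matrix.det_updateCol_smul]
    rw [Matrix.det_zero_of_column_eq hc01.symm
      (fun i => by simp [Matrix.updateCol_apply, hc01.symm, (Ne.symm hc01)])]
    · ring
  -- assemble
  have htend2 : Filter.Tendsto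
      (fun s => ((Real.sign (s - y m) : ℝ) : ℂ) * (Base.updateCol c₀ (v2 s)).det)
      (nhds (y m)) (nhds 0) := by
    apply squeeze_zero_norm (a := fun s => ‖(Base.updateCol c₀ (v2 s)).det‖)
    · intro s
      rw [norm_mul]
      have hb : ‖((Real.sign (s - y m) : ℝ) : ℂ)‖ ≤ 1 := by
        rw [Complex.norm_real, Real.norm_eq_abs]
        rcases lt_trichotomy (s - y m) 0 with hlt | heq | hgt
        · simp [Real.sign_of_neg hlt]
        · simp [heq, Real.sign_zero]
        · simp [Real.sign_of_pos hgt]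
      calc ‖((Real.sign (s - y m) : ℝ) : ℂ)‖ * ‖(Base.updateCol c₀ (v2 s)).det‖
          ≤ 1 * ‖(Base.updateCol c₀ (v2 s)).det‖ := by
            apply mul_le_mul_of_nonneg_right hb (norm_nonneg _)
        _ = ‖(Base.updateCol c₀ (v2 s)).det‖ := one_mul _
    · have : Filter.Tendsto (fun s => ‖(Base.updateCol c₀ (v2 s)).det‖) (nhds (y m))
          (nhds ‖(Base.updateCol c₀ (v2 (y m))).det‖) :=
        (continuous_norm.continuousAt).comp h2cont
      rw [h2zero, norm_zero] at this
      exact this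
  have : ContinuousAt (fun s =>
      (Base.updateCol c₀ (v1 s)).det +
        ((Real.sign (s - y m) : ℝ) : ℂ) * (Base.updateCol c₀ (v2 s)).det) (y m) := by
    unfold ContinuousAt
    have := h1cont.tendsto.add htend2
    simpa [Real.sign_zero] using this
  exact this.congr (Filter.Eventually.of_forall fun s => (hdet s).symm)

/-- Continuity of `Ψ` in the coordinate `x_n` at the point `x_n = y_m`: the one-variable
function `s ↦ Ψ(x with x_n := s, y)` is continuous at `y m`, and its one-sided limits from
above and from below agree with its value there. -/
theorem psi_continuous_at_collision (N M : ℕ) (hM : 1 ≤ M) (c : ℝ)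
    (k : Fin (N + M) → ℝ) (Λ : Fin M → ℝ)
    (n : Fin N) (m : Fin M) (x : Fin N → ℝ) (y : Fin M → ℝ)
    (hy : ∀ m' s, m' ≠ s → y m' ≠ y s)
    (hx : ∀ l s, l ≠ n → x l ≠ y s) :
    ContinuousAt (fun s : ℝ => Psi N M c k Λ (Function.update x n s) y) (y m) ∧
    Filter.Tendsto (fun s : ℝ => Psi N M c k Λ (Function.update x n s) y)
      (nhdsWithin (y m) (Set.Ioi (y m)))
      (nhds (Psi N M c k Λ (Function.update x n (y m)) y)) ∧
    Filter.Tendsto (fun s : ℝ => Psi N M c k Λ (Function.update x n s) y)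
      (nhdsWithin (y m) (Set.Iio (y m)))
      (nhds (Psi N M c k Λ (Function.update x n (y m)) y)) := by
  have hcont : ContinuousAt (fun s : ℝ => Psi N M c k Λ (Function.update x n s) y) (y m) := by
    unfold Psi
    exact tendsto_finset_sum _ fun R _ =>
      ContinuousAt.mul continuousAt_const
        (det_key N M c k Λ R n m x y fun s' hs' => hy s' m hs')
  exact ⟨hcont, hcont.tendsto.mono_left nhdsWithin_le_nhds,
    hcont.tendsto.mono_left nhdsWithin_le_nhds⟩
end

section
/- Fix indices n ∈ {1, …, N} and m ∈ {1, …, M}, and fix all coordinates other than x_n and y_m such that the coordinates y_1, …, y_M are pairwise distinct and x_l ≠ y_s for every pair (l, s) with (l, s) ≠ (n, m). Write F(s, t) for Ψ evaluated with x_n = s and y_m = t (all other coordinates fixed), and let t_0 denote the fixed value of y_m. Then the delta-interaction jump condition holds: the limit as ε → 0⁺ of [(∂F/∂s − ∂F/∂t)(t_0 + ε, t_0) − (∂F/∂s − ∂F/∂t)(t_0 − ε, t_0)] exists and equals 4c·F(t_0, t_0). -/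
open Complex Finset Function

noncomputable def AcoefS (c kj lam σ : ℝ) : ℂ :=
  Complex.I * ((kj : ℂ) - (lam : ℂ)) + (c : ℂ) * ((σ : ℝ) : ℂ)

lemma Acoef_eq_AcoefS (c kj lam t : ℝ) : Acoef c kj lam t = AcoefS c kj lam (Real.sign t) := rfl

noncomputable def prefC (M : ℕ) (c : ℝ) (Λ : Fin M → ℝ) (R : Equiv.Perm (Fin M))
    (y : Fin M → ℝ) : ℂ :=
  ∏ p ∈ Finset.univ.filter (fun p : Fin M × Fin M => p.1 < p.2),
    (Complex.I * ((Λ (R p.1) : ℂ) - (Λ (R p.2) : ℂ)) +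
      2 * (c : ℂ) * ((Real.sign (y p.2 - y p.1) : ℝ) : ℂ))

section Aux
variable {N M : ℕ} {c : ℝ} {k : Fin (N + M) → ℝ} {Λ : Fin M → ℝ}

lemma Psi_eq (x : Fin N → ℝ) (y : Fin M → ℝ) :
    Psi N M c k Λ x y = ∑ R : Equiv.Perm (Fin M),
      ((Equiv.Perm.sign R : ℤ) : ℂ) * prefC M c Λ R y * (PhiMat N M c k Λ R x y).det := rfl

lemma phiMat_inl (R : Equiv.Perm (Fin M)) (x : Fin N → ℝ) (y : Fin M → ℝ)
    (j : Fin (N + M)) (l : Fin N) :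
    PhiMat N M c k Λ R x y j (finSumFinEquiv (Sum.inl l)) =
      (∏ s : Fin M, Acoef c (k j) (Λ (R s)) (x l - y s)) *
        Complex.exp (Complex.I * ((k j : ℂ)) * ((x l : ℝ) : ℂ)) := by
  simp [PhiMat]

lemma phiMat_inr (R : Equiv.Perm (Fin M)) (x : Fin N → ℝ) (y : Fin M → ℝ)
    (j : Fin (N + M)) (m : Fin M) :
    PhiMat N M c k Λ R x y j (finSumFinEquiv (Sum.inr m)) =
      (∏ s ∈ Finset.univ.erase m, Acoef c (k j) (Λ (R s)) (y m - y s)) *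
        Complex.exp (Complex.I * ((k j : ℂ)) * ((y m : ℝ) : ℂ)) := by
  simp [PhiMat]

lemma phiMat_update_x (R : Equiv.Perm (Fin M)) (x : Fin N → ℝ) (y : Fin M → ℝ)
    (n : Fin N) (s : ℝ) (σv : Fin M → ℝ) (hs : ∀ j, Real.sign (s - y j) = σv j) :
    PhiMat N M c k Λ R (Function.update x n s) y
      = (PhiMat N M c k Λ R x y).updateCol (finSumFinEquiv (Sum.inl n))
          (fun j => (∏ s' : Fin M, AcoefS c (k j) (Λ (R s')) (σv s')) *
            Complex.exp (Complex.I * ((k j : ℂ)) * (s : ℂ))) := by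
  ext j col
  obtain ⟨cl, rfl⟩ : ∃ cl, finSumFinEquiv cl = col := ⟨finSumFinEquiv.symm col, by simp⟩
  cases cl with
  | inl l =>
    rcases eq_or_ne l n with rfl | hl
    · rw [Matrix.updateCol_self, phiMat_inl]
      simp only [Function.update_self]
      congr 1
      refine Finset.prod_congr rfl fun s' _ => ?_
      rw [Acoef_eq_AcoefS, hs s']
    · rw [Matrix.updateCol_ne (fun h => hl (Sum.inl.inj (finSumFinEquiv.injective h))),
        phiMat_inl, phiMat_inl, Function.update_of_ne hl]
  | inr m' =>
    rw [Matrix.updateCol_ne (fun h => by simpa using finSumFinEquiv.injective h),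
      phiMat_inr, phiMat_inr]

lemma phiMat_update_y (R : Equiv.Perm (Fin M)) (x' : Fin N → ℝ) (y : Fin M → ℝ)
    (m : Fin M) (t : ℝ)
    (ha : ∀ l, Real.sign (x' l - t) = Real.sign (x' l - y m))
    (hb : ∀ s, s ≠ m → Real.sign (y s - t) = Real.sign (y s - y m))
    (hc : ∀ s, s ≠ m → Real.sign (t - y s) = Real.sign (y m - y s)) :
    PhiMat N M c k Λ R x' (Function.update y m t)
      = (PhiMat N M c k Λ R x' y).updateCol (finSumFinEquiv (Sum.inr m))
          (fun j => (∏ s' ∈ Finset.univ.erase m, Acoef c (k j) (Λ (R s')) (y m - y s')) *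
            Complex.exp (Complex.I * ((k j : ℂ)) * (t : ℂ))) := by
  ext j col
  obtain ⟨cl, rfl⟩ : ∃ cl, finSumFinEquiv cl = col := ⟨finSumFinEquiv.symm col, by simp⟩
  cases cl with
  | inl l =>
    rw [Matrix.updateCol_ne (fun h => by simpa using finSumFinEquiv.injective h),
      phiMat_inl, phiMat_inl]
    congr 1
    refine Finset.prod_congr rfl fun s' _ => ?_
    rcases eq_or_ne s' m with rfl | hs'
    · rw [Function.update_self, Acoef_eq_AcoefS, Acoef_eq_AcoefS, ha l]
    · rw [Function.update_of_ne hs']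
  | inr m' =>
    rcases eq_or_ne m' m with rfl | hm'
    · rw [Matrix.updateCol_self, phiMat_inr]
      simp only [Function.update_self]
      congr 1
      refine Finset.prod_congr rfl fun s' hs' => ?_
      have hs'm : s' ≠ m' := Finset.ne_of_mem_erase hs'
      rw [Function.update_of_ne hs'm, Acoef_eq_AcoefS, Acoef_eq_AcoefS, hc s' hs'm]
    · rw [Matrix.updateCol_ne
        (fun h => hm' (Sum.inr.inj (finSumFinEquiv.injective h))),
        phiMat_inr, phiMat_inr, Function.update_of_ne hm']
      congr 1
      refine Finset.prod_congr rfl fun s' hs' => ?_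
      rcases eq_or_ne s' m with rfl | hs'm
      · rw [Function.update_self, Acoef_eq_AcoefS, Acoef_eq_AcoefS, hb m' hm']
      · rw [Function.update_of_ne hs'm]

lemma pref_update (R : Equiv.Perm (Fin M)) (y : Fin M → ℝ) (m : Fin M) (t : ℝ)
    (hb : ∀ s, s ≠ m → Real.sign (y s - t) = Real.sign (y s - y m))
    (hc : ∀ s, s ≠ m → Real.sign (t - y s) = Real.sign (y m - y s)) :
    prefC M c Λ R (Function.update y m t) = prefC M c Λ R y := by
  unfold prefC
  refine Finset.prod_congr rfl fun p hp => ?_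
  have hlt : p.1 < p.2 := (Finset.mem_filter.mp hp).2
  have hne : p.1 ≠ p.2 := ne_of_lt hlt
  rcases eq_or_ne p.1 m with rfl | h1
  · rw [Function.update_self, Function.update_of_ne (Ne.symm hne)]
    rw [show Real.sign (y p.2 - t) = Real.sign (y p.2 - y p.1) from hb p.2 (Ne.symm hne)]
  · rcases eq_or_ne p.2 m with rfl | h2
    · rw [Function.update_self, Function.update_of_ne h1]
      rw [show Real.sign (t - y p.1) = Real.sign (y p.2 - y p.1) from hc p.1 h1]
    · rw [Function.update_of_ne h1, Function.update_of_ne h2]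

end Aux

lemma det_updateColumn_expand {q : ℕ} (B : Matrix (Fin q) (Fin q) ℂ) (c0 : Fin q)
    (g : Fin q → ℂ) :
    (B.updateCol c0 g).det = ∑ σ : Equiv.Perm (Fin q),
      ((Equiv.Perm.sign σ : ℤ) : ℂ) * (g (σ c0) * ∏ i ∈ Finset.univ.erase c0, B (σ i) i) := by
  rw [Matrix.det_apply']
  refine Finset.sum_congr rfl fun σ _ => ?_
  congr 1
  rw [← Finset.mul_prod_erase Finset.univ _ (Finset.mem_univ c0), Matrix.updateCol_self]
  exact congrArg _ (Finset.prod_congr rfl fun i hi =>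
    Matrix.updateCol_ne (Finset.ne_of_mem_erase hi))

lemma hasDerivAt_det_updateColumn_exp {q : ℕ} (B : Matrix (Fin q) (Fin q) ℂ)
    (c0 : Fin q) (v κ : Fin q → ℂ) (u : ℝ) :
    HasDerivAt (fun s : ℝ => (B.updateCol c0 (fun j => v j * Complex.exp (κ j * s))).det)
      ((B.updateCol c0 (fun j => κ j * (v j * Complex.exp (κ j * u)))).det) u := by
  have hexp : ∀ w : ℂ, HasDerivAt (fun s : ℝ => Complex.exp (w * s)) (w * Complex.exp (w * u)) u := by
    intro w
    have h1 : HasDerivAt (fun s : ℝ => (s : ℂ)) 1 u := by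
      simpa using (hasDerivAt_id u).ofReal_comp
    have h2 := (h1.const_mul w).cexp
    simpa [mul_comm] using h2
  have hsum : HasDerivAt
      (fun s : ℝ => ∑ σ : Equiv.Perm (Fin q), ((Equiv.Perm.sign σ : ℤ) : ℂ) *
        ((v (σ c0) * Complex.exp (κ (σ c0) * s)) * ∏ i ∈ Finset.univ.erase c0, B (σ i) i))
      (∑ σ : Equiv.Perm (Fin q), ((Equiv.Perm.sign σ : ℤ) : ℂ) *
        ((v (σ c0) * (κ (σ c0) * Complex.exp (κ (σ c0) * u))) *
          ∏ i ∈ Finset.univ.erase c0, B (σ i) i)) u :=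
    HasDerivAt.fun_sum fun σ _ =>
      ((((hexp (κ (σ c0))).const_mul (v (σ c0))).mul_const _).const_mul _)
  have heq : ∀ s : ℝ, (B.updateCol c0 (fun j => v j * Complex.exp (κ j * s))).det
      = ∑ σ : Equiv.Perm (Fin q), ((Equiv.Perm.sign σ : ℤ) : ℂ) *
        ((v (σ c0) * Complex.exp (κ (σ c0) * s)) * ∏ i ∈ Finset.univ.erase c0, B (σ i) i) :=
    fun s => det_updateColumn_expand B c0 _
  rw [show (B.updateCol c0 (fun j => κ j * (v j * Complex.exp (κ j * u)))).det
      = ∑ σ : Equiv.Perm (Fin q), ((Equiv.Perm.sign σ : ℤ) : ℂ) *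
        ((v (σ c0) * (κ (σ c0) * Complex.exp (κ (σ c0) * u))) *
          ∏ i ∈ Finset.univ.erase c0, B (σ i) i) from by
    rw [det_updateColumn_expand]; exact Finset.sum_congr rfl fun σ _ => by ring]
  exact hsum.congr_of_eventuallyEq (Filter.Eventually.of_forall heq)

lemma updateColumn_comm' {q : ℕ} (B : Matrix (Fin q) (Fin q) ℂ) {c1 c2 : Fin q}
    (h : c1 ≠ c2) (v w : Fin q → ℂ) :
    (B.updateCol c1 v).updateCol c2 w = (B.updateCol c2 w).updateCol c1 v := by
  ext i j
  simp only [Matrix.updateCol_apply]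
  split_ifs with h1 h2 <;> first
    | rfl
    | (exact absurd (h2 ▸ h1 : c1 = c2).symm h.symm)
    | (subst h1; subst h2; exact absurd rfl h)

lemma signlem {a t t0 : ℝ} (h : |t - t0| < |a - t0|) :
    Real.sign (a - t) = Real.sign (a - t0) := by
  rcases lt_trichotomy a t0 with hlt | rfl | hgt
  · have h1 : a - t0 < 0 := by linarith
    have h2 : a - t < 0 := by
      have := abs_lt.mp h
      rw [abs_of_neg h1] at h this
      linarith [this.1, this.2]
    rw [Real.sign_of_neg h1, Real.sign_of_neg h2]
  · exfalso; simp only [sub_self, abs_zero] at h; linarith [abs_nonneg (t - a)]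
  · have h1 : 0 < a - t0 := by linarith
    have h2 : 0 < a - t := by
      have := abs_lt.mp h
      rw [abs_of_pos h1] at h this
      linarith [this.1, this.2]
    rw [Real.sign_of_pos h1, Real.sign_of_pos h2]

lemma signlem2 {a t t0 : ℝ} (h : |t - t0| < |a - t0|) :
    Real.sign (t - a) = Real.sign (t0 - a) := by
  rw [show t - a = -(a - t) by ring, show t0 - a = -(a - t0) by ring,
    Real.sign_neg, Real.sign_neg, signlem h]

section Deriv
variable {N M : ℕ} {c : ℝ} {k : Fin (N + M) → ℝ} {Λ : Fin M → ℝ}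

lemma derivS (x : Fin N → ℝ) (y : Fin M → ℝ) (n : Fin N) (σv : Fin M → ℝ) (s0 : ℝ)
    (hsgn : ∀ᶠ s in nhds s0, ∀ j, Real.sign (s - y j) = σv j) :
    deriv (fun s : ℝ => Psi N M c k Λ (Function.update x n s) y) s0
      = ∑ R : Equiv.Perm (Fin M), ((Equiv.Perm.sign R : ℤ) : ℂ) * prefC M c Λ R y *
          ((PhiMat N M c k Λ R x y).updateCol (finSumFinEquiv (Sum.inl n))
            (fun j => (Complex.I * (k j : ℂ)) *
              ((∏ s' : Fin M, AcoefS c (k j) (Λ (R s')) (σv s')) *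
                Complex.exp (Complex.I * (k j : ℂ) * (s0 : ℂ))))).det := by
  have hG : (fun s : ℝ => Psi N M c k Λ (Function.update x n s) y) =ᶠ[nhds s0]
      (fun s : ℝ => ∑ R : Equiv.Perm (Fin M), ((Equiv.Perm.sign R : ℤ) : ℂ) * prefC M c Λ R y *
          ((PhiMat N M c k Λ R x y).updateCol (finSumFinEquiv (Sum.inl n))
            (fun j => (∏ s' : Fin M, AcoefS c (k j) (Λ (R s')) (σv s')) *
              Complex.exp (Complex.I * (k j : ℂ) * (s : ℂ)))).det) := by
    filter_upwards [hsgn] with s hs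
    rw [Psi_eq]
    exact Finset.sum_congr rfl fun R _ => by rw [phiMat_update_x R x y n s σv hs]
  rw [hG.deriv_eq]
  refine HasDerivAt.deriv ?_
  exact HasDerivAt.fun_sum fun R _ =>
    (hasDerivAt_det_updateColumn_exp _ _ _ (fun j => Complex.I * (k j : ℂ)) s0).const_mul _

lemma derivT (x' : Fin N → ℝ) (y : Fin M → ℝ) (m : Fin M)
    (hev : ∀ᶠ t in nhds (y m),
      (∀ l, Real.sign (x' l - t) = Real.sign (x' l - y m)) ∧
      (∀ s, s ≠ m → Real.sign (y s - t) = Real.sign (y s - y m)) ∧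
      (∀ s, s ≠ m → Real.sign (t - y s) = Real.sign (y m - y s))) :
    deriv (fun t : ℝ => Psi N M c k Λ x' (Function.update y m t)) (y m)
      = ∑ R : Equiv.Perm (Fin M), ((Equiv.Perm.sign R : ℤ) : ℂ) * prefC M c Λ R y *
          ((PhiMat N M c k Λ R x' y).updateCol (finSumFinEquiv (Sum.inr m))
            (fun j => (Complex.I * (k j : ℂ)) *
              ((∏ s' ∈ Finset.univ.erase m, Acoef c (k j) (Λ (R s')) (y m - y s')) *
                Complex.exp (Complex.I * (k j : ℂ) * ((y m : ℝ) : ℂ))))).det := by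
  have hG : (fun t : ℝ => Psi N M c k Λ x' (Function.update y m t)) =ᶠ[nhds (y m)]
      (fun t : ℝ => ∑ R : Equiv.Perm (Fin M), ((Equiv.Perm.sign R : ℤ) : ℂ) * prefC M c Λ R y *
          ((PhiMat N M c k Λ R x' y).updateCol (finSumFinEquiv (Sum.inr m))
            (fun j => (∏ s' ∈ Finset.univ.erase m, Acoef c (k j) (Λ (R s')) (y m - y s')) *
              Complex.exp (Complex.I * (k j : ℂ) * (t : ℂ)))).det) := by
    filter_upwards [hev] with t ht
    rw [Psi_eq]
    refine Finset.sum_congr rfl fun R _ => ?_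
    rw [phiMat_update_y R x' y m t ht.1 ht.2.1 ht.2.2, pref_update R y m t ht.2.1 ht.2.2]
  rw [hG.deriv_eq]
  refine HasDerivAt.deriv ?_
  exact HasDerivAt.fun_sum fun R _ =>
    (hasDerivAt_det_updateColumn_exp _ _ _ (fun j => Complex.I * (k j : ℂ)) (y m)).const_mul _

end Deriv

noncomputable def uvec (N M : ℕ) (c : ℝ) (k : Fin (N + M) → ℝ) (Λ : Fin M → ℝ)
    (R : Equiv.Perm (Fin M)) (y : Fin M → ℝ) (m : Fin M) : Fin (N + M) → ℂ :=
  fun j => ∏ s' ∈ Finset.univ.erase m, Acoef c (k j) (Λ (R s')) (y m - y s')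

noncomputable def Pvec (N M : ℕ) (c : ℝ) (k : Fin (N + M) → ℝ) (Λ : Fin M → ℝ)
    (R : Equiv.Perm (Fin M)) (y : Fin M → ℝ) (m : Fin M) (e : ℝ) : Fin (N + M) → ℂ :=
  fun j => ∏ s' : Fin M, AcoefS c (k j) (Λ (R s')) (if s' = m then e else Real.sign (y m - y s'))

noncomputable def Evec (N M : ℕ) (k : Fin (N + M) → ℝ) (r : ℝ) : Fin (N + M) → ℂ :=
  fun j => Complex.exp (Complex.I * ((k j : ℂ)) * ((r : ℝ) : ℂ))

section Bracket
variable {N M : ℕ} {c : ℝ} {k : Fin (N + M) → ℝ} {Λ : Fin M → ℝ}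

lemma Pvec_eq (R : Equiv.Perm (Fin M)) (y : Fin M → ℝ) (m : Fin M) (e : ℝ) (j : Fin (N + M)) :
    Pvec N M c k Λ R y m e j = AcoefS c (k j) (Λ (R m)) e * uvec N M c k Λ R y m j := by
  unfold Pvec uvec
  rw [← Finset.mul_prod_erase Finset.univ _ (Finset.mem_univ m), if_pos rfl]
  congr 1
  exact Finset.prod_congr rfl fun s' hs' => by
    rw [if_neg (Finset.ne_of_mem_erase hs'), Acoef_eq_AcoefS]

lemma phiMat_colM (R : Equiv.Perm (Fin M)) (x : Fin N → ℝ) (y : Fin M → ℝ) (m : Fin M)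
    (j : Fin (N + M)) :
    PhiMat N M c k Λ R x y j (finSumFinEquiv (Sum.inr m))
      = uvec N M c k Λ R y m j * Evec N M k (y m) j :=
  phiMat_inr R x y j m

lemma bracket_eq (R : Equiv.Perm (Fin M)) (x : Fin N → ℝ) (y : Fin M → ℝ)
    (n : Fin N) (m : Fin M) :
    ((((PhiMat N M c k Λ R x y).updateCol (finSumFinEquiv (Sum.inl n))
        (fun j => Complex.I * (k j : ℂ) *
          (Pvec N M c k Λ R y m 1 j * Evec N M k (y m) j))).det
      - (((PhiMat N M c k Λ R x y).updateCol (finSumFinEquiv (Sum.inr m))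
          (fun j => Complex.I * (k j : ℂ) * (uvec N M c k Λ R y m j * Evec N M k (y m) j))).updateCol
            (finSumFinEquiv (Sum.inl n))
          (fun j => Pvec N M c k Λ R y m 1 j * Evec N M k (y m) j)).det)
    - (((PhiMat N M c k Λ R x y).updateCol (finSumFinEquiv (Sum.inl n))
        (fun j => Complex.I * (k j : ℂ) *
          (Pvec N M c k Λ R y m (-1) j * Evec N M k (y m) j))).det
      - (((PhiMat N M c k Λ R x y).updateCol (finSumFinEquiv (Sum.inr m))
          (fun j => Complex.I * (k j : ℂ) * (uvec N M c k Λ R y m j * Evec N M k (y m) j))).updateCol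
            (finSumFinEquiv (Sum.inl n))
          (fun j => Pvec N M c k Λ R y m (-1) j * Evec N M k (y m) j)).det))
    = 4 * (c : ℂ) * ((PhiMat N M c k Λ R x y).updateCol (finSumFinEquiv (Sum.inl n))
        (fun j => Pvec N M c k Λ R y m 0 j * Evec N M k (y m) j)).det := by
  set B := PhiMat N M c k Λ R x y with hB
  set colN := finSumFinEquiv (Sum.inl n) with hcolN
  set colM := (finSumFinEquiv (Sum.inr m) : Fin (N + M)) with hcolM
  set u := uvec N M c k Λ R y m with hu
  set E := Evec N M k (y m) with hE
  have hNM : colN ≠ colM := fun h => by simpa using finSumFinEquiv.injective h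
  have hBM : ∀ i, B i colM = u i * E i := fun i => phiMat_colM R x y m i
  set B' := B.updateCol colM (fun j => Complex.I * (k j : ℂ) * (u j * E j)) with hB'
  -- linear decomposition of the "+1" column vs "-1" column
  have h1 : (fun j => Complex.I * (k j : ℂ) * (Pvec N M c k Λ R y m 1 j * E j))
      = (fun j => Complex.I * (k j : ℂ) * (Pvec N M c k Λ R y m (-1) j * E j))
        + (2 * (c : ℂ)) • (fun j => Complex.I * (k j : ℂ) * (u j * E j)) := by
    funext j
    simp only [Pi.add_apply, Pi.smul_apply, smul_eq_mul, Pvec_eq, AcoefS]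
    push_cast
    ring
  have h2 : (fun j => Pvec N M c k Λ R y m 1 j * E j)
      = (fun j => Pvec N M c k Λ R y m (-1) j * E j)
        + (2 * (c : ℂ)) • (fun j => u j * E j) := by
    funext j
    simp only [Pi.add_apply, Pi.smul_apply, smul_eq_mul, Pvec_eq, AcoefS]
    push_cast
    ring
  have h0 : (fun j => Complex.I * (k j : ℂ) * (u j * E j))
      = (fun j => Pvec N M c k Λ R y m 0 j * E j)
        + (Complex.I * ((Λ (R m) : ℝ) : ℂ)) • (fun j => u j * E j) := by
    funext j
    simp only [Pi.add_apply, Pi.smul_apply, smul_eq_mul, Pvec_eq, AcoefS]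
    push_cast
    ring
  have ha : (B.updateCol colN
        (fun j => Complex.I * (k j : ℂ) * (Pvec N M c k Λ R y m 1 j * E j))).det
      = (B.updateCol colN
          (fun j => Complex.I * (k j : ℂ) * (Pvec N M c k Λ R y m (-1) j * E j))).det
        + 2 * (c : ℂ) * (B.updateCol colN
            (fun j => Complex.I * (k j : ℂ) * (u j * E j))).det := by
    rw [h1, Matrix.det_updateCol_add, Matrix.det_updateCol_smul]
  have hb : (B'.updateCol colN (fun j => Pvec N M c k Λ R y m 1 j * E j)).det
      = (B'.updateCol colN (fun j => Pvec N M c k Λ R y m (-1) j * E j)).det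
        + 2 * (c : ℂ) * (B'.updateCol colN (fun j => u j * E j)).det := by
    rw [h2, Matrix.det_updateCol_add, Matrix.det_updateCol_smul]
  -- the swap identity
  have hswap : B'.updateCol colN (fun j => u j * E j)
      = ((B.updateCol colN (fun j => Complex.I * (k j : ℂ) * (u j * E j))).submatrix
          id (Equiv.swap colN colM)) := by
    ext i col
    rcases eq_or_ne col colN with rfl | hN
    · rw [Matrix.updateCol_self]
      simp only [Matrix.submatrix_apply, id_eq, Equiv.swap_apply_left]
      rw [Matrix.updateCol_ne (Ne.symm hNM), hBM i]
    · rcases eq_or_ne col colM with rfl | hM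
      · rw [Matrix.updateCol_ne (show colM ≠ colN from hNM.symm), hB', Matrix.updateCol_self]
        simp only [Matrix.submatrix_apply, id_eq, Equiv.swap_apply_right]
        rw [Matrix.updateCol_self]
      · rw [Matrix.updateCol_ne hN, hB', Matrix.updateCol_ne hM]
        simp only [Matrix.submatrix_apply, id_eq, Equiv.swap_apply_of_ne_of_ne hN hM]
        rw [Matrix.updateCol_ne hN]
  have hc : (B'.updateCol colN (fun j => u j * E j)).det
      = - (B.updateCol colN (fun j => Complex.I * (k j : ℂ) * (u j * E j))).det := by
    rw [hswap, Matrix.det_permute', Equiv.Perm.sign_swap hNM]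
    simp
  have hzero : (B.updateCol colN (fun j => u j * E j)).det = 0 := by
    refine Matrix.det_zero_of_column_eq hNM fun i => ?_
    rw [Matrix.updateCol_self, Matrix.updateCol_ne (Ne.symm hNM), hBM i]
  have hd : (B.updateCol colN (fun j => Complex.I * (k j : ℂ) * (u j * E j))).det
      = (B.updateCol colN (fun j => Pvec N M c k Λ R y m 0 j * E j)).det := by
    rw [h0, Matrix.det_updateCol_add, Matrix.det_updateCol_smul, hzero]
    ring
  rw [ha, hb, hc, hd]
  ring

end Bracket

lemma cont_det_update {q : ℕ} (B : Matrix (Fin q) (Fin q) ℂ) (c0 : Fin q)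
    (F : Fin q → ℝ → ℂ) (hF : ∀ j, Continuous (F j)) :
    Continuous fun ε : ℝ => (B.updateCol c0 (fun j => F j ε)).det := by
  apply Continuous.matrix_det
  apply continuous_matrix
  intro i col
  rcases eq_or_ne col c0 with rfl | h
  · simpa only [Matrix.updateCol_self] using hF i
  · simp only [Matrix.updateCol_ne h]
    exact continuous_const

noncomputable def Jfun (N M : ℕ) (c : ℝ) (k : Fin (N + M) → ℝ) (Λ : Fin M → ℝ)
    (x : Fin N → ℝ) (y : Fin M → ℝ) (n : Fin N) (m : Fin M) (ε : ℝ) : ℂ :=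
  ∑ R : Equiv.Perm (Fin M), ((Equiv.Perm.sign R : ℤ) : ℂ) * prefC M c Λ R y *
    ((((PhiMat N M c k Λ R x y).updateCol (finSumFinEquiv (Sum.inl n))
        (fun j => Complex.I * (k j : ℂ) *
          (Pvec N M c k Λ R y m 1 j * Evec N M k (y m + ε) j))).det
      - (((PhiMat N M c k Λ R x y).updateCol (finSumFinEquiv (Sum.inr m))
          (fun j => Complex.I * (k j : ℂ) * (uvec N M c k Λ R y m j * Evec N M k (y m) j))).updateCol
            (finSumFinEquiv (Sum.inl n))
          (fun j => Pvec N M c k Λ R y m 1 j * Evec N M k (y m + ε) j)).det)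
    - (((PhiMat N M c k Λ R x y).updateCol (finSumFinEquiv (Sum.inl n))
        (fun j => Complex.I * (k j : ℂ) *
          (Pvec N M c k Λ R y m (-1) j * Evec N M k (y m - ε) j))).det
      - (((PhiMat N M c k Λ R x y).updateCol (finSumFinEquiv (Sum.inr m))
          (fun j => Complex.I * (k j : ℂ) * (uvec N M c k Λ R y m j * Evec N M k (y m) j))).updateCol
            (finSumFinEquiv (Sum.inl n))
          (fun j => Pvec N M c k Λ R y m (-1) j * Evec N M k (y m - ε) j)).det))

/-- The delta-interaction jump condition: with `F(s, t)` denoting `Ψ` evaluated with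
`x_n = s` and `y_m = t`, and `t₀ = y m` the fixed value of `y_m`, the jump of
`∂F/∂s − ∂F/∂t` across the diagonal equals `4c·F(t₀, t₀)`. -/
theorem psi_jump_condition (N M : ℕ) (hM : 1 ≤ M) (c : ℝ)
    (k : Fin (N + M) → ℝ) (Λ : Fin M → ℝ)
    (n : Fin N) (m : Fin M) (x : Fin N → ℝ) (y : Fin M → ℝ)
    (hy : ∀ m' s, m' ≠ s → y m' ≠ y s)
    (hx : ∀ l s, (l, s) ≠ (n, m) → x l ≠ y s) :
    Filter.Tendsto
      (fun ε : ℝ =>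
        ((deriv (fun s : ℝ =>
            Psi N M c k Λ (Function.update x n s) (Function.update y m (y m))) (y m + ε) -
          deriv (fun t : ℝ =>
            Psi N M c k Λ (Function.update x n (y m + ε)) (Function.update y m t)) (y m)) -
         (deriv (fun s : ℝ =>
            Psi N M c k Λ (Function.update x n s) (Function.update y m (y m))) (y m - ε) -
          deriv (fun t : ℝ =>
            Psi N M c k Λ (Function.update x n (y m - ε)) (Function.update y m t)) (y m))))
      (nhdsWithin 0 (Set.Ioi (0 : ℝ)))
      (nhds (4 * (c : ℂ) *
        Psi N M c k Λ (Function.update x n (y m)) (Function.update y m (y m)))) := by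
  classical
  have hNM1 : (finSumFinEquiv (Sum.inl n) : Fin (N + M)) ≠ finSumFinEquiv (Sum.inr m) :=
    fun h => by simpa using finSumFinEquiv.injective h
  simp only [Function.update_eq_self]
  -- choose δ
  obtain ⟨δ, hδpos, hδy, hδx⟩ : ∃ δ : ℝ, 0 < δ ∧ (∀ s, s ≠ m → δ ≤ |y s - y m|) ∧
      (∀ l, l ≠ n → δ ≤ |x l - y m|) := by
    set D : Finset ℝ := (((Finset.univ.erase m).image fun s => |y s - y m|) ∪
      ((Finset.univ.erase n).image fun l => |x l - y m|)) ∪ {1} with hD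
    have hne : D.Nonempty := ⟨1, by simp [hD]⟩
    refine ⟨D.min' hne, ?_, ?_, ?_⟩
    · have hpos : ∀ a ∈ D, 0 < a := by
        intro a ha
        simp only [hD, Finset.mem_union, Finset.mem_image, Finset.mem_erase,
          Finset.mem_singleton] at ha
        rcases ha with (⟨s, ⟨hs, _⟩, rfl⟩ | ⟨l, ⟨hl, _⟩, rfl⟩) | rfl
        · exact abs_pos.mpr (sub_ne_zero.mpr (hy s m hs))
        · exact abs_pos.mpr (sub_ne_zero.mpr (hx l m (by simp [Prod.ext_iff, hl])))
        · norm_num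
      exact hpos _ (D.min'_mem hne)
    · intro s hs
      refine D.min'_le _ ?_
      simp only [hD, Finset.mem_union, Finset.mem_image, Finset.mem_erase, Finset.mem_singleton]
      exact Or.inl (Or.inl ⟨s, ⟨hs, Finset.mem_univ s⟩, rfl⟩)
    · intro l hl
      refine D.min'_le _ ?_
      simp only [hD, Finset.mem_union, Finset.mem_image, Finset.mem_erase, Finset.mem_singleton]
      exact Or.inl (Or.inr ⟨l, ⟨hl, Finset.mem_univ l⟩, rfl⟩)
  -- sign stability
  have hsp : ∀ s : ℝ, y m < s → s < y m + δ → ∀ j : Fin M,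
      Real.sign (s - y j) = if j = m then (1 : ℝ) else Real.sign (y m - y j) := by
    intro s h1 h2 j
    rcases eq_or_ne j m with rfl | hj
    · rw [if_pos rfl]; exact Real.sign_of_pos (by linarith)
    · rw [if_neg hj]
      refine signlem2 ?_
      calc |s - y m| = s - y m := abs_of_pos (by linarith)
      _ < δ := by linarith
      _ ≤ |y j - y m| := hδy j hj
  have hsm : ∀ s : ℝ, y m - δ < s → s < y m → ∀ j : Fin M,
      Real.sign (s - y j) = if j = m then (-1 : ℝ) else Real.sign (y m - y j) := by
    intro s h1 h2 j
    rcases eq_or_ne j m with rfl | hj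
    · rw [if_pos rfl]; exact Real.sign_of_neg (by linarith)
    · rw [if_neg hj]
      refine signlem2 ?_
      calc |s - y m| = -(s - y m) := abs_of_neg (by linarith)
      _ < δ := by linarith
      _ ≤ |y j - y m| := hδy j hj
  -- eventual hypotheses for the t-derivative
  have hevT : ∀ ε : ℝ, 0 < ε → ε < δ → ∀ v : ℝ, |v - y m| = ε →
      ∀ᶠ t in nhds (y m),
        (∀ l, Real.sign (Function.update x n v l - t)
            = Real.sign (Function.update x n v l - y m)) ∧
        (∀ s, s ≠ m → Real.sign (y s - t) = Real.sign (y s - y m)) ∧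
        (∀ s, s ≠ m → Real.sign (t - y s) = Real.sign (y m - y s)) := by
    intro ε hε0 hεδ v hv
    have hρ : 0 < min ε δ := lt_min hε0 hδpos
    filter_upwards [Ioo_mem_nhds (by linarith : y m - min ε δ < y m)
      (by linarith : y m < y m + min ε δ)] with t ht
    have habs : |t - y m| < min ε δ := abs_lt.mpr ⟨by linarith [ht.1], by linarith [ht.2]⟩
    refine ⟨fun l => ?_,
      fun s hs => signlem (habs.trans_le ((min_le_right ε δ).trans (hδy s hs))),
      fun s hs => signlem2 (habs.trans_le ((min_le_right ε δ).trans (hδy s hs)))⟩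
    rcases eq_or_ne l n with rfl | hl
    · rw [Function.update_self]
      exact signlem (habs.trans_le ((min_le_left ε δ).trans_eq hv.symm))
    · rw [Function.update_of_ne hl]
      exact signlem (habs.trans_le ((min_le_right ε δ).trans (hδx l hl)))
  -- continuity of Jfun
  have hEp : ∀ j : Fin (N + M), Continuous fun ε : ℝ => Evec N M k (y m + ε) j := by
    intro j
    exact Complex.continuous_exp.comp (continuous_const.mul
      (Complex.continuous_ofReal.comp (continuous_const.add continuous_id)))
  have hEm : ∀ j : Fin (N + M), Continuous fun ε : ℝ => Evec N M k (y m - ε) j := by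
    intro j
    exact Complex.continuous_exp.comp (continuous_const.mul
      (Complex.continuous_ofReal.comp (continuous_const.sub continuous_id)))
  have hJcont : Continuous (Jfun N M c k Λ x y n m) := by
    unfold Jfun
    refine continuous_finset_sum _ fun R _ => continuous_const.mul ?_
    refine Continuous.sub (Continuous.sub ?_ ?_) (Continuous.sub ?_ ?_)
    · exact cont_det_update _ _
        (fun j ε => Complex.I * (k j : ℂ) * (Pvec N M c k Λ R y m 1 j * Evec N M k (y m + ε) j))
        (fun j => continuous_const.mul (continuous_const.mul (hEp j)))
    · exact cont_det_update _ _
        (fun j ε => Pvec N M c k Λ R y m 1 j * Evec N M k (y m + ε) j)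
        (fun j => continuous_const.mul (hEp j))
    · exact cont_det_update _ _
        (fun j ε => Complex.I * (k j : ℂ) * (Pvec N M c k Λ R y m (-1) j * Evec N M k (y m - ε) j))
        (fun j => continuous_const.mul (continuous_const.mul (hEm j)))
    · exact cont_det_update _ _
        (fun j ε => Pvec N M c k Λ R y m (-1) j * Evec N M k (y m - ε) j)
        (fun j => continuous_const.mul (hEm j))
  -- value at 0
  have hJ0 : Jfun N M c k Λ x y n m 0
      = 4 * (c : ℂ) * Psi N M c k Λ (Function.update x n (y m)) y := by
    have hs0 : ∀ j, Real.sign (y m - y j)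
        = (fun s' => if s' = m then (0 : ℝ) else Real.sign (y m - y s')) j := by
      intro j
      show Real.sign (y m - y j) = if j = m then (0 : ℝ) else Real.sign (y m - y j)
      rcases eq_or_ne j m with rfl | h
      · rw [if_pos rfl, sub_self, Real.sign_zero]
      · rw [if_neg h]
    unfold Jfun
    simp only [add_zero, sub_zero]
    rw [Psi_eq, Finset.mul_sum]
    refine Finset.sum_congr rfl fun R _ => ?_
    rw [bracket_eq R x y n m,
      phiMat_update_x R x y n (y m) (fun s' => if s' = m then (0 : ℝ) else Real.sign (y m - y s')) hs0]
    simp only [Pvec, Evec]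
    ring
  -- eventual equality
  have hkey : ∀ᶠ ε in nhdsWithin (0 : ℝ) (Set.Ioi 0),
      Jfun N M c k Λ x y n m ε =
        ((deriv (fun s : ℝ => Psi N M c k Λ (Function.update x n s) y) (y m + ε) -
          deriv (fun t : ℝ =>
            Psi N M c k Λ (Function.update x n (y m + ε)) (Function.update y m t)) (y m)) -
         (deriv (fun s : ℝ => Psi N M c k Λ (Function.update x n s) y) (y m - ε) -
          deriv (fun t : ℝ =>
            Psi N M c k Λ (Function.update x n (y m - ε)) (Function.update y m t)) (y m))) := by
    filter_upwards [Ioo_mem_nhdsGT_of_mem (Set.left_mem_Ico.mpr hδpos)] with ε hε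
    obtain ⟨hε0, hεδ⟩ := hε
    have e1 := derivS (c := c) (k := k) (Λ := Λ) x y n
      (fun j => if j = m then (1 : ℝ) else Real.sign (y m - y j)) (y m + ε)
      (Filter.eventually_of_mem
        (Ioo_mem_nhds (by linarith : y m < y m + ε) (by linarith : y m + ε < y m + δ))
        (fun s hs j => hsp s hs.1 hs.2 j))
    have e2 := derivS (c := c) (k := k) (Λ := Λ) x y n
      (fun j => if j = m then (-1 : ℝ) else Real.sign (y m - y j)) (y m - ε)
      (Filter.eventually_of_mem
        (Ioo_mem_nhds (by linarith : y m - δ < y m - ε) (by linarith : y m - ε < y m))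
        (fun s hs j => hsm s hs.1 hs.2 j))
    have e3 := derivT (c := c) (k := k) (Λ := Λ) (Function.update x n (y m + ε)) y m
      (hevT ε hε0 hεδ (y m + ε) (by rw [add_sub_cancel_left, abs_of_pos hε0]))
    have e4 := derivT (c := c) (k := k) (Λ := Λ) (Function.update x n (y m - ε)) y m
      (hevT ε hε0 hεδ (y m - ε) (by rw [sub_sub_cancel_left, abs_neg, abs_of_pos hε0]))
    rw [e1, e2, e3, e4]
    have hM1 : ∀ R : Equiv.Perm (Fin M),
        PhiMat N M c k Λ R (Function.update x n (y m + ε)) y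
          = (PhiMat N M c k Λ R x y).updateCol (finSumFinEquiv (Sum.inl n))
              (fun j => (∏ s' : Fin M, AcoefS c (k j) (Λ (R s'))
                  ((fun j => if j = m then (1 : ℝ) else Real.sign (y m - y j)) s')) *
                Complex.exp (Complex.I * (k j : ℂ) * ((y m + ε : ℝ) : ℂ))) :=
      fun R => phiMat_update_x R x y n (y m + ε) _
        (fun j => hsp _ (by linarith) (by linarith) j)
    have hM2 : ∀ R : Equiv.Perm (Fin M),
        PhiMat N M c k Λ R (Function.update x n (y m - ε)) y
          = (PhiMat N M c k Λ R x y).updateCol (finSumFinEquiv (Sum.inl n))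
              (fun j => (∏ s' : Fin M, AcoefS c (k j) (Λ (R s'))
                  ((fun j => if j = m then (-1 : ℝ) else Real.sign (y m - y j)) s')) *
                Complex.exp (Complex.I * (k j : ℂ) * ((y m - ε : ℝ) : ℂ))) :=
      fun R => phiMat_update_x R x y n (y m - ε) _
        (fun j => hsm _ (by linarith) (by linarith) j)
    simp only [hM1, hM2, updateColumn_comm' _ hNM1]
    unfold Jfun
    simp only [Pvec, uvec, Evec]
    rw [← Finset.sum_sub_distrib, ← Finset.sum_sub_distrib, ← Finset.sum_sub_distrib]
    exact Finset.sum_congr rfl fun R _ => by ring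
  have htend := (hJcont.tendsto 0).mono_left (nhdsWithin_le_nhds
    (s := Set.Ioi (0 : ℝ)))
  rw [hJ0] at htend
  exact Filter.Tendsto.congr' hkey htend
end

section
/- The wave function Ψ is totally antisymmetric in the spin-down coordinates: for every permutation σ of {1, …, N} and all x ∈ ℝ^N, y ∈ ℝ^M, Ψ((x_{σ(1)}, …, x_{σ(N)}), y) = sgn(σ)·Ψ(x, y). -/
open Complex Finset Function

/-- `Ψ` is totally antisymmetric in the spin-down coordinates `x`. -/
theorem psi_antisymmetric_x (N M : ℕ) (hM : 1 ≤ M) (c : ℝ)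
    (k : Fin (N + M) → ℝ) (Λ : Fin M → ℝ) :
    ∀ σ : Equiv.Perm (Fin N), ∀ x : Fin N → ℝ, ∀ y : Fin M → ℝ,
      Psi N M c k Λ (fun i => x (σ i)) y
        = ((Equiv.Perm.sign σ : ℤ) : ℂ) * Psi N M c k Λ x y := by
  intro σ x y
  have key : ∀ R : Equiv.Perm (Fin M),
      (PhiMat N M c k Λ R (fun i => x (σ i)) y).det
        = ((Equiv.Perm.sign σ : ℤ) : ℂ) * (PhiMat N M c k Λ R x y).det := by
    intro R
    set τ : Equiv.Perm (Fin (N + M)) :=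
      finSumFinEquiv.permCongr (Equiv.sumCongr σ (Equiv.refl (Fin M))) with hτ
    have hmat : PhiMat N M c k Λ R (fun i => x (σ i)) y
        = (PhiMat N M c k Λ R x y).submatrix id τ := by
      funext j col
      have h1 : finSumFinEquiv.symm (τ col)
          = Equiv.sumCongr σ (Equiv.refl (Fin M)) (finSumFinEquiv.symm col) := by
        simp [hτ, Equiv.permCongr_apply]
      simp only [PhiMat, Matrix.submatrix_apply, id_eq, h1]
      cases finSumFinEquiv.symm col with
      | inl l => simp
      | inr m => simp
    rw [hmat, Matrix.det_permute', hτ]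
    congr 2
    rw [Equiv.Perm.sign_permCongr, Equiv.Perm.sign_sumCongr]
    simp
  simp only [Psi, key, Finset.mul_sum]
  congr 1
  funext R
  ring
end

section
/- The wave function Ψ is totally antisymmetric in the quasi-momenta: writing Ψ_k(x, y) for the wave function built from parameters k = (k_1, …, k_{N+M}), for every permutation σ of {1, …, N+M} one has Ψ_{(k_{σ(1)}, …, k_{σ(N+M)})}(x, y) = sgn(σ)·Ψ_k(x, y) for all x ∈ ℝ^N, y ∈ ℝ^M. -/
open Complex Finset Function

/-- `Ψ` is totally antisymmetric in the quasi-momenta `k`. -/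
theorem psi_antisymmetric_k (N M : ℕ) (hM : 1 ≤ M) (c : ℝ)
    (k : Fin (N + M) → ℝ) (Λ : Fin M → ℝ) :
    ∀ σ : Equiv.Perm (Fin (N + M)), ∀ x : Fin N → ℝ, ∀ y : Fin M → ℝ,
      Psi N M c (fun j => k (σ j)) Λ x y
        = ((Equiv.Perm.sign σ : ℤ) : ℂ) * Psi N M c k Λ x y := by
  intro σ x y
  have hmat : ∀ R : Equiv.Perm (Fin M),
      PhiMat N M c (fun j => k (σ j)) Λ R x y
        = fun j => PhiMat N M c k Λ R x y (σ j) := by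
    intro R; funext j col; simp [PhiMat]
  have hdet : ∀ R : Equiv.Perm (Fin M),
      (PhiMat N M c (fun j => k (σ j)) Λ R x y).det
        = ((Equiv.Perm.sign σ : ℤ) : ℂ) * (PhiMat N M c k Λ R x y).det := by
    intro R
    rw [hmat R]
    have h := Matrix.det_permute σ (PhiMat N M c k Λ R x y)
    simp only [Matrix.submatrix, id] at h ⊢
    exact h
  unfold Psi
  rw [Finset.mul_sum]
  refine Finset.sum_congr rfl fun R _ => ?_
  rw [hdet R]
  ring
end

section
/- The wave function Ψ is totally antisymmetric in the spin-up coordinates: for every permutation σ of {1, …, M} and all x ∈ ℝ^N, y ∈ ℝ^M, Ψ(x, (y_{σ(1)}, …, y_{σ(M)})) = sgn(σ)·Ψ(x, y). -/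
open Complex Finset Function

private lemma sign_eq_signAux' {n : ℕ} (σ : Equiv.Perm (Fin n)) :
    Equiv.Perm.sign σ = Equiv.Perm.signAux σ := by
  refine Equiv.Perm.swap_induction_on σ ?_ ?_
  · simp [Equiv.Perm.signAux_one]
  · intro f x y hxy ih
    rw [Equiv.Perm.sign_mul, Equiv.Perm.signAux_mul, ih, Equiv.Perm.sign_swap hxy,
      Equiv.Perm.signAux_swap hxy]

private lemma prod_pairs_antisymm {M : ℕ} (f : Fin M → Fin M → ℂ)
    (hf : ∀ a b, f b a = - f a b) (σ : Equiv.Perm (Fin M)) :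
    ∏ p ∈ Finset.univ.filter (fun p : Fin M × Fin M => p.1 < p.2), f (σ p.1) (σ p.2)
      = ((Equiv.Perm.sign σ : ℤ) : ℂ) *
        ∏ p ∈ Finset.univ.filter (fun p : Fin M × Fin M => p.1 < p.2), f p.1 p.2 := by
  set S := Finset.univ.filter (fun p : Fin M × Fin M => p.1 < p.2) with hS
  have hmem : ∀ p : Fin M × Fin M, p ∈ S ↔ p.1 < p.2 := by
    intro p; simp [hS]
  have step1 : ∀ p ∈ S, f (σ p.1) (σ p.2)
      = (if σ p.1 < σ p.2 then (1:ℂ) else -1) *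
        (if σ p.1 < σ p.2 then f (σ p.1) (σ p.2) else f (σ p.2) (σ p.1)) := by
    intro p hp
    by_cases h : σ p.1 < σ p.2
    · simp [h]
    · simp only [h, if_false]
      rw [hf]; ring
  rw [Finset.prod_congr rfl step1, Finset.prod_mul_distrib]
  have h_eps : ∏ p ∈ S, (if σ p.1 < σ p.2 then (1:ℂ) else -1)
      = ((Equiv.Perm.sign σ : ℤ) : ℂ) := by
    rw [sign_eq_signAux']
    unfold Equiv.Perm.signAux
    rw [show (((∏ x ∈ Equiv.Perm.finPairsLT M, if σ x.1 ≤ σ x.2 then (-1 : ℤˣ) else 1 : ℤˣ) : ℤ) : ℂ)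
        = ∏ x ∈ Equiv.Perm.finPairsLT M, (((if σ x.1 ≤ σ x.2 then (-1 : ℤˣ) else 1 : ℤˣ) : ℤ) : ℂ) by
      push_cast; rfl]
    refine Finset.prod_nbij' (fun p => ⟨p.2, p.1⟩) (fun q => (q.2, q.1)) ?_ ?_ ?_ ?_ ?_
    · intro p hp
      rw [Equiv.Perm.mem_finPairsLT]
      exact (hmem p).1 hp
    · intro q hq
      rw [hmem]
      exact Equiv.Perm.mem_finPairsLT.1 hq
    · intro p hp; rfl
    · intro q hq; rfl
    · intro p hp
      have hlt := (hmem p).1 hp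
      have hne : σ p.1 ≠ σ p.2 := fun h => (ne_of_lt hlt) (σ.injective h)
      by_cases h : σ p.1 < σ p.2
      · have : ¬ (σ p.2 ≤ σ p.1) := not_le.2 h
        simp [h, this]
      · have : σ p.2 ≤ σ p.1 := le_of_lt (lt_of_le_of_ne (not_lt.1 h) (Ne.symm hne))
        simp [h, this]
  rw [h_eps]
  congr 1
  refine Finset.prod_nbij'
    (fun p => if σ p.1 < σ p.2 then (σ p.1, σ p.2) else (σ p.2, σ p.1))
    (fun q => if σ.symm q.1 < σ.symm q.2 then (σ.symm q.1, σ.symm q.2)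
      else (σ.symm q.2, σ.symm q.1)) ?_ ?_ ?_ ?_ ?_
  · intro p hp
    have hlt := (hmem p).1 hp
    have hne : σ p.1 ≠ σ p.2 := fun h => (ne_of_lt hlt) (σ.injective h)
    by_cases h : σ p.1 < σ p.2
    · rw [hmem]; simp [h]
    · rw [hmem]
      simp only [h, if_false]
      exact lt_of_le_of_ne (not_lt.1 h) (Ne.symm hne)
  · intro q hq
    have hlt := (hmem q).1 hq
    have hne : σ.symm q.1 ≠ σ.symm q.2 := fun h => (ne_of_lt hlt) (σ.symm.injective h)
    by_cases h : σ.symm q.1 < σ.symm q.2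
    · rw [hmem]; simp [h]
    · rw [hmem]
      simp only [h, if_false]
      exact lt_of_le_of_ne (not_lt.1 h) (Ne.symm hne)
  · intro p hp
    have hlt := (hmem p).1 hp
    by_cases h : σ p.1 < σ p.2
    · simp [h, hlt]
    · simp [h, not_lt.2 (le_of_lt hlt)]
  · intro q hq
    have hlt := (hmem q).1 hq
    by_cases h : σ.symm q.1 < σ.symm q.2
    · simp [h, hlt]
    · simp [h, not_lt.2 (le_of_lt hlt)]
  · intro p hp
    by_cases h : σ p.1 < σ p.2 <;> simp [h]

private lemma phiMat_perm (N M : ℕ) (c : ℝ) (k : Fin (N + M) → ℝ) (Λ : Fin M → ℝ)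
    (R σ : Equiv.Perm (Fin M)) (x : Fin N → ℝ) (y : Fin M → ℝ) :
    PhiMat N M c k Λ R x (fun i => y (σ i))
      = (PhiMat N M c k Λ (R * σ⁻¹) x y).submatrix id
          (finSumFinEquiv.permCongr ((Equiv.refl (Fin N)).sumCongr σ)) := by
  funext j col
  rw [Matrix.submatrix_apply, id]
  have hτ : finSumFinEquiv.symm
      ((finSumFinEquiv.permCongr ((Equiv.refl (Fin N)).sumCongr σ)) col)
      = ((Equiv.refl (Fin N)).sumCongr σ) (finSumFinEquiv.symm col) := by
    rw [Equiv.permCongr_apply, Equiv.symm_apply_apply]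
  rcases hc : finSumFinEquiv.symm col with l | m
  · rw [hc] at hτ
    show (match finSumFinEquiv.symm col with
      | Sum.inl l =>
        (∏ s : Fin M, Acoef c (k j) (Λ (R s)) (x l - y (σ s))) *
          Complex.exp (Complex.I * ((k j : ℂ)) * ((x l : ℝ) : ℂ))
      | Sum.inr m =>
        (∏ s ∈ Finset.univ.erase m, Acoef c (k j) (Λ (R s)) (y (σ m) - y (σ s))) *
          Complex.exp (Complex.I * ((k j : ℂ)) * ((y (σ m) : ℝ) : ℂ))) = _
    rw [PhiMat, hc, hτ]
    simp only [Equiv.sumCongr_apply, Sum.map_inl, Equiv.refl_apply]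
    congr 1
    exact Fintype.prod_equiv σ _ _ (fun s => by simp [Equiv.Perm.mul_apply])
  · rw [hc] at hτ
    show (match finSumFinEquiv.symm col with
      | Sum.inl l =>
        (∏ s : Fin M, Acoef c (k j) (Λ (R s)) (x l - y (σ s))) *
          Complex.exp (Complex.I * ((k j : ℂ)) * ((x l : ℝ) : ℂ))
      | Sum.inr m =>
        (∏ s ∈ Finset.univ.erase m, Acoef c (k j) (Λ (R s)) (y (σ m) - y (σ s))) *
          Complex.exp (Complex.I * ((k j : ℂ)) * ((y (σ m) : ℝ) : ℂ))) = _
    rw [PhiMat, hc, hτ]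
    simp only [Equiv.sumCongr_apply, Sum.map_inr]
    congr 1
    refine Finset.prod_nbij' (fun s => σ s) (fun s => σ.symm s) ?_ ?_ ?_ ?_ ?_
    · intro a ha
      rw [Finset.mem_erase] at ha ⊢
      exact ⟨fun h => ha.1 (σ.injective h), Finset.mem_univ _⟩
    · intro a ha
      rw [Finset.mem_erase] at ha ⊢
      refine ⟨fun h => ha.1 ?_, Finset.mem_univ _⟩
      rw [← h]; simp
    · intro a _; simp
    · intro a _; simp
    · intro a _
      simp [Equiv.Perm.mul_apply]

/-- `Ψ` is totally antisymmetric in the spin-up coordinates `y`. -/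
theorem psi_antisymmetric_y (N M : ℕ) (hM : 1 ≤ M) (c : ℝ)
    (k : Fin (N + M) → ℝ) (Λ : Fin M → ℝ) :
    ∀ σ : Equiv.Perm (Fin M), ∀ x : Fin N → ℝ, ∀ y : Fin M → ℝ,
      Psi N M c k Λ x (fun i => y (σ i))
        = ((Equiv.Perm.sign σ : ℤ) : ℂ) * Psi N M c k Λ x y := by
  intro σ x y
  have hs2 : ((Equiv.Perm.sign σ : ℤ) : ℂ) * ((Equiv.Perm.sign σ : ℤ) : ℂ) = 1 := by
    rcases Int.units_eq_one_or (Equiv.Perm.sign σ) with h | h <;> rw [h] <;> norm_num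
  unfold Psi
  rw [Finset.mul_sum]
  refine Fintype.sum_equiv (Equiv.mulRight σ⁻¹) _ _ ?_
  intro R
  simp only [Equiv.coe_mulRight]
  -- determinant part
  have hdet : (PhiMat N M c k Λ R x (fun i => y (σ i))).det
      = ((Equiv.Perm.sign σ : ℤ) : ℂ) * (PhiMat N M c k Λ (R * σ⁻¹) x y).det := by
    rw [phiMat_perm, Matrix.det_permute']
    congr 2
    rw [Equiv.Perm.sign_permCongr, Equiv.Perm.sign_sumCongr]
    simp
  -- prefactor part
  have hpre : (∏ p ∈ Finset.univ.filter (fun p : Fin M × Fin M => p.1 < p.2),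
        (Complex.I * ((Λ (R p.1) : ℂ) - (Λ (R p.2) : ℂ)) +
          2 * (c : ℂ) * ((Real.sign (y (σ p.2) - y (σ p.1)) : ℝ) : ℂ)))
      = ((Equiv.Perm.sign σ : ℤ) : ℂ) *
        ∏ p ∈ Finset.univ.filter (fun p : Fin M × Fin M => p.1 < p.2),
        (Complex.I * ((Λ ((R * σ⁻¹) p.1) : ℂ) - (Λ ((R * σ⁻¹) p.2) : ℂ)) +
          2 * (c : ℂ) * ((Real.sign (y p.2 - y p.1) : ℝ) : ℂ)) := by
    set f : Fin M → Fin M → ℂ := fun a b =>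
      Complex.I * ((Λ ((R * σ⁻¹) a) : ℂ) - (Λ ((R * σ⁻¹) b) : ℂ)) +
        2 * (c : ℂ) * ((Real.sign (y b - y a) : ℝ) : ℂ) with hf_def
    have hf : ∀ a b, f b a = - f a b := by
      intro a b
      simp only [hf_def]
      rw [show y a - y b = -(y b - y a) by ring, Real.sign_neg]
      push_cast
      ring
    have h1 : (∏ p ∈ Finset.univ.filter (fun p : Fin M × Fin M => p.1 < p.2),
        (Complex.I * ((Λ (R p.1) : ℂ) - (Λ (R p.2) : ℂ)) +
          2 * (c : ℂ) * ((Real.sign (y (σ p.2) - y (σ p.1)) : ℝ) : ℂ)))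
        = ∏ p ∈ Finset.univ.filter (fun p : Fin M × Fin M => p.1 < p.2),
            f (σ p.1) (σ p.2) := by
      refine Finset.prod_congr rfl fun p _ => ?_
      simp only [hf_def, Equiv.Perm.mul_apply, Equiv.Perm.coe_inv, Equiv.symm_apply_apply]
    rw [h1, prod_pairs_antisymm f hf σ]
  rw [hdet, hpre]
  have hsgn : ((Equiv.Perm.sign R : ℤ) : ℂ)
      = ((Equiv.Perm.sign (R * σ⁻¹) : ℤ) : ℂ) * ((Equiv.Perm.sign σ : ℤ) : ℂ) := by
    have : Equiv.Perm.sign R = Equiv.Perm.sign (R * σ⁻¹) * Equiv.Perm.sign σ := by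
      rw [← Equiv.Perm.sign_mul, inv_mul_cancel_right]
    rw [this]
    push_cast
    ring
  rw [hsgn]
  set a := ((Equiv.Perm.sign σ : ℤ) : ℂ)
  set b := ((Equiv.Perm.sign (R * σ⁻¹) : ℤ) : ℂ)
  set P := ∏ p ∈ Finset.univ.filter (fun p : Fin M × Fin M => p.1 < p.2),
        (Complex.I * ((Λ ((R * σ⁻¹) p.1) : ℂ) - (Λ ((R * σ⁻¹) p.2) : ℂ)) +
          2 * (c : ℂ) * ((Real.sign (y p.2 - y p.1) : ℝ) : ℂ))
  set D := (PhiMat N M c k Λ (R * σ⁻¹) x y).det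
  linear_combination (b * P * D * a) * hs2
end

section
/- The wave function Ψ is totally antisymmetric in the spin-rapidities: writing Ψ_Λ(x, y) for the wave function built from parameters Λ = (Λ_1, …, Λ_M), for every permutation σ of {1, …, M} one has Ψ_{(Λ_{σ(1)}, …, Λ_{σ(M)})}(x, y) = sgn(σ)·Ψ_Λ(x, y) for all x ∈ ℝ^N, y ∈ ℝ^M. -/
open Complex Finset Function

/-- `Ψ` is totally antisymmetric in the spin-rapidities `Λ`. -/
theorem psi_antisymmetric_lambda (N M : ℕ) (hM : 1 ≤ M) (c : ℝ)
    (k : Fin (N + M) → ℝ) (Λ : Fin M → ℝ) :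
    ∀ σ : Equiv.Perm (Fin M), ∀ x : Fin N → ℝ, ∀ y : Fin M → ℝ,
      Psi N M c k (fun μ => Λ (σ μ)) x y
        = ((Equiv.Perm.sign σ : ℤ) : ℂ) * Psi N M c k Λ x y := by
  intro σ x y
  have hmat : ∀ R : Equiv.Perm (Fin M),
      PhiMat N M c k (fun μ => Λ (σ μ)) R x y = PhiMat N M c k Λ (σ * R) x y := by
    intro R
    funext j col
    simp [PhiMat, Equiv.Perm.mul_apply]
  rw [Psi, Psi, Finset.mul_sum]
  refine Fintype.sum_equiv (Equiv.mulLeft σ) _ _ ?_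
  intro R
  rw [hmat]
  simp only [Equiv.coe_mulLeft, Equiv.Perm.mul_apply]
  have hs : ((Equiv.Perm.sign (σ * R) : ℤ) : ℂ)
      = ((Equiv.Perm.sign σ : ℤ) : ℂ) * ((Equiv.Perm.sign R : ℤ) : ℂ) := by
    rw [Equiv.Perm.sign_mul]; push_cast; ring
  have hsq : ((Equiv.Perm.sign σ : ℤ) : ℂ) * ((Equiv.Perm.sign σ : ℤ) : ℂ) = 1 := by
    have h := Int.units_mul_self (Equiv.Perm.sign σ)
    have h2 : ((Equiv.Perm.sign σ : ℤ) * (Equiv.Perm.sign σ : ℤ)) = 1 := by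
      rw [← Units.val_mul, h]; rfl
    exact_mod_cast congrArg (fun z : ℤ => (z : ℂ)) h2
  rw [hs]
  set P := ∏ p ∈ Finset.univ.filter (fun p : Fin M × Fin M => p.1 < p.2),
        (Complex.I * ((Λ (σ (R p.1)) : ℂ) - (Λ (σ (R p.2)) : ℂ)) +
          2 * (c : ℂ) * ((Real.sign (y p.2 - y p.1) : ℝ) : ℂ)) with hP
  set D := (PhiMat N M c k Λ (σ * R) x y).det with hD
  linear_combination (-(((Equiv.Perm.sign R : ℤ) : ℂ) * P * D)) * hsq
end

section
/- For every c > 0 and a > 0, the function Λ ↦ v_c(Λ, a) is a bijection from ℝ onto the open interval (−a, a); in particular v_c(Λ, a) ∈ (−a, a) for every Λ ∈ ℝ, v_c(Λ, a) → −a as Λ → +∞, and v_c(Λ, a) → +a as Λ → −∞. -/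
open Real Filter

/-- `v_c(Λ, a) = (1/π)·∫_{−a}^{a} arctan((k − Λ)/c) dk`. -/
noncomputable def vfun (c Λ a : ℝ) : ℝ :=
  (1 / Real.pi) * ∫ x in (-a)..a, Real.arctan ((x - Λ) / c)

lemma vfun_continuous (c a : ℝ) : Continuous (fun Λ : ℝ => vfun c Λ a) := by
  apply Continuous.mul continuous_const
  exact intervalIntegral.continuous_parametric_intervalIntegral_of_continuous'
    (f := fun Λ x => Real.arctan ((x - Λ) / c))
    (Real.continuous_arctan.comp (by fun_prop)) _ _

lemma vfun_strictAnti (c a : ℝ) (hc : 0 < c) (ha : 0 < a) :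
    StrictAnti (fun Λ : ℝ => vfun c Λ a) := by
  intro Λ₁ Λ₂ h
  have hπ : (0:ℝ) < 1 / Real.pi := by positivity
  apply mul_lt_mul_of_pos_left _ hπ
  apply intervalIntegral.integral_lt_integral_of_continuousOn_of_le_of_exists_lt
    (by linarith) (by apply Continuous.continuousOn; exact Real.continuous_arctan.comp (by fun_prop)) (by apply Continuous.continuousOn; exact Real.continuous_arctan.comp (by fun_prop))
  · intro x _
    exact (Real.arctan_strictMono (by gcongr)).le
  · exact ⟨0, Set.mem_Icc.2 ⟨by linarith, by linarith⟩,
      Real.arctan_strictMono (by gcongr)⟩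

lemma vfun_mem (c a : ℝ) (hc : 0 < c) (ha : 0 < a) (Λ : ℝ) :
    vfun c Λ a ∈ Set.Ioo (-a) a := by
  have hπ : (0:ℝ) < 1 / Real.pi := by positivity
  have hlt : (∫ x in (-a)..a, Real.arctan ((x - Λ) / c)) <
      ∫ _x in (-a)..a, (Real.pi / 2 : ℝ) := by
    apply intervalIntegral.integral_lt_integral_of_continuousOn_of_le_of_exists_lt
      (by linarith) (by apply Continuous.continuousOn; exact Real.continuous_arctan.comp (by fun_prop)) continuousOn_const
    · intro x _; exact (Real.arctan_lt_pi_div_two _).le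
    · exact ⟨0, Set.mem_Icc.2 ⟨by linarith, by linarith⟩, Real.arctan_lt_pi_div_two _⟩
  have hgt : (∫ _x in (-a)..a, (-(Real.pi / 2) : ℝ)) <
      ∫ x in (-a)..a, Real.arctan ((x - Λ) / c) := by
    apply intervalIntegral.integral_lt_integral_of_continuousOn_of_le_of_exists_lt
      (by linarith) continuousOn_const (by apply Continuous.continuousOn; exact Real.continuous_arctan.comp (by fun_prop))
    · intro x _; exact (Real.neg_pi_div_two_lt_arctan _).le
    · exact ⟨0, Set.mem_Icc.2 ⟨by linarith, by linarith⟩, Real.neg_pi_div_two_lt_arctan _⟩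
  rw [intervalIntegral.integral_const] at hlt hgt
  have hπpos := Real.pi_pos
  constructor
  · have := mul_lt_mul_of_pos_left hgt hπ
    unfold vfun
    calc -a = (1 / Real.pi) * ((a - -a) • (-(Real.pi / 2))) := by
          simp only [smul_eq_mul]; field_simp; try ring_nf
      _ < _ := this
  · have := mul_lt_mul_of_pos_left hlt hπ
    unfold vfun
    calc vfun c Λ a < (1 / Real.pi) * ((a - -a) • (Real.pi / 2)) := this
      _ = a := by simp only [smul_eq_mul]; field_simp; try ring_nf

lemma vfun_tendsto_atTop (c a : ℝ) (hc : 0 < c) (ha : 0 < a) :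
    Tendsto (fun Λ : ℝ => vfun c Λ a) atTop (nhds (-a)) := by
  have h : Tendsto (fun Λ : ℝ => ∫ x in (-a)..a, Real.arctan ((x - Λ) / c)) atTop
      (nhds (∫ _x in (-a)..a, (-(Real.pi / 2) : ℝ))) := by
    apply intervalIntegral.tendsto_integral_filter_of_dominated_convergence
      (fun _ => Real.pi / 2)
    · filter_upwards with Λ using (Real.continuous_arctan.comp (by fun_prop) : Continuous fun x =>
        Real.arctan ((x - Λ) / c)).aestronglyMeasurable
    · filter_upwards with Λ
      filter_upwards with x _
      rw [Real.norm_eq_abs, abs_le]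
      exact ⟨(Real.neg_pi_div_two_lt_arctan _).le, (Real.arctan_lt_pi_div_two _).le⟩
    · exact intervalIntegrable_const
    · filter_upwards with x _
      have h1 : Tendsto (fun Λ : ℝ => (x - Λ) / c) atTop atBot := by
        apply Tendsto.atBot_div_const hc
        exact (tendsto_atBot_add_const_left atTop x tendsto_neg_atTop_atBot).congr (fun _ => (sub_eq_add_neg _ _).symm)
      exact (Real.tendsto_arctan_atBot.mono_right nhdsWithin_le_nhds).comp h1
  rw [intervalIntegral.integral_const] at h
  have := h.const_mul (1 / Real.pi)
  convert this using 2
  · rfl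
  have hπpos := Real.pi_pos
  simp only [smul_eq_mul]; field_simp; try ring_nf

lemma vfun_tendsto_atBot (c a : ℝ) (hc : 0 < c) (ha : 0 < a) :
    Tendsto (fun Λ : ℝ => vfun c Λ a) atBot (nhds a) := by
  have h : Tendsto (fun Λ : ℝ => ∫ x in (-a)..a, Real.arctan ((x - Λ) / c)) atBot
      (nhds (∫ _x in (-a)..a, (Real.pi / 2 : ℝ))) := by
    apply intervalIntegral.tendsto_integral_filter_of_dominated_convergence
      (fun _ => Real.pi / 2)
    · filter_upwards with Λ using (Real.continuous_arctan.comp (by fun_prop) : Continuous fun x =>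
        Real.arctan ((x - Λ) / c)).aestronglyMeasurable
    · filter_upwards with Λ
      filter_upwards with x _
      rw [Real.norm_eq_abs, abs_le]
      exact ⟨(Real.neg_pi_div_two_lt_arctan _).le, (Real.arctan_lt_pi_div_two _).le⟩
    · exact intervalIntegrable_const
    · filter_upwards with x _
      have h1 : Tendsto (fun Λ : ℝ => (x - Λ) / c) atBot atTop := by
        apply Tendsto.atTop_div_const hc
        exact (tendsto_atTop_add_const_left atBot x tendsto_neg_atBot_atTop).congr (fun _ => (sub_eq_add_neg _ _).symm)
      exact (Real.tendsto_arctan_atTop.mono_right nhdsWithin_le_nhds).comp h1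
  rw [intervalIntegral.integral_const] at h
  have := h.const_mul (1 / Real.pi)
  convert this using 2
  · rfl
  have hπpos := Real.pi_pos
  simp only [smul_eq_mul]; field_simp; try ring_nf

/-- For `c > 0` and `a > 0`, `Λ ↦ v_c(Λ, a)` is a bijection from `ℝ` onto `(−a, a)`;
in particular its values lie in `(−a, a)`, it tends to `−a` as `Λ → +∞`, and to `+a`
as `Λ → −∞`. -/
theorem vfun_bijOn (c a : ℝ) (hc : 0 < c) (ha : 0 < a) :
    Set.BijOn (fun Λ : ℝ => vfun c Λ a) Set.univ (Set.Ioo (-a) a) ∧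
    (∀ Λ : ℝ, vfun c Λ a ∈ Set.Ioo (-a) a) ∧
    Filter.Tendsto (fun Λ : ℝ => vfun c Λ a) Filter.atTop (nhds (-a)) ∧
    Filter.Tendsto (fun Λ : ℝ => vfun c Λ a) Filter.atBot (nhds a) := by
  have hmem := vfun_mem c a hc ha
  have htop := vfun_tendsto_atTop c a hc ha
  have hbot := vfun_tendsto_atBot c a hc ha
  have hcont := vfun_continuous c a
  refine ⟨⟨fun Λ _ => hmem Λ, ((vfun_strictAnti c a hc ha).injective).injOn, ?_⟩,
    hmem, htop, hbot⟩
  intro y hy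
  obtain ⟨Λ₁, hΛ₁⟩ := (htop.eventually_lt_const hy.1).exists
  obtain ⟨Λ₂, hΛ₂⟩ := (hbot.eventually_const_lt hy.2).exists
  have : y ∈ Set.uIcc (vfun c Λ₁ a) (vfun c Λ₂ a) :=
    Set.mem_uIcc.2 (Or.inl ⟨hΛ₁.le, hΛ₂.le⟩)
  obtain ⟨x, _, hx⟩ := intermediate_value_uIcc (hcont.continuousOn) this
  exact ⟨x, Set.mem_univ x, hx⟩
end

section
/- For every a > 0 and every λ ∈ ℝ, the limit of v_c(c·λ, a) as c → +∞ equals −(2a/π)·arctan(λ). Consequently, in the hardcore limit the spin rapidity Λ = c·λ corresponding to a free momentum k ∈ (−a, a) satisfies λ = −tan(π·k/(2a)). -/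
open Real Filter

/-- In the hardcore limit `c → +∞` with `Λ = c·λ`, one has
`v_c(c·λ, a) → −(2a/π)·arctan(λ)`; consequently the rapidity parameter `λ` corresponding
to a free momentum `k ∈ (−a, a)` satisfies `λ = −tan(π·k/(2a))`. -/
theorem vfun_hardcore_limit (a : ℝ) (ha : 0 < a) :
    (∀ lam : ℝ,
      Filter.Tendsto (fun c : ℝ => vfun c (c * lam) a) Filter.atTop
        (nhds (-(2 * a / Real.pi) * Real.arctan lam))) ∧
    (∀ k lam : ℝ, k ∈ Set.Ioo (-a) a →
      -(2 * a / Real.pi) * Real.arctan lam = k →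
        lam = -Real.tan (Real.pi * k / (2 * a))) := by
  constructor
  · intro lam
    have hπ : (0:ℝ) < Real.pi := Real.pi_pos
    have h1 : Tendsto (fun c : ℝ => ∫ x in (-a)..a, Real.arctan ((x - c * lam) / c))
        atTop (nhds (∫ _x in (-a)..a, Real.arctan (-lam))) := by
      apply intervalIntegral.tendsto_integral_filter_of_dominated_convergence
        (fun _ => Real.pi / 2)
      · filter_upwards with c
        exact (Real.continuous_arctan.comp (by continuity)).aestronglyMeasurable
      · filter_upwards with c
        filter_upwards with x _
        rw [Real.norm_eq_abs, abs_le]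
        exact ⟨(Real.neg_pi_div_two_lt_arctan _).le, (Real.arctan_lt_pi_div_two _).le⟩
      · exact intervalIntegrable_const
      · filter_upwards with x _
        have hx : Tendsto (fun c : ℝ => (x - c * lam) / c) atTop (nhds (-lam)) := by
          have h0 : Tendsto (fun c : ℝ => x / c - lam) atTop (nhds (0 - lam)) :=
            (tendsto_const_nhds.div_atTop tendsto_id).sub_const lam
          rw [zero_sub] at h0
          refine h0.congr' ?_
          filter_upwards [eventually_gt_atTop (0:ℝ)] with c hc
          field_simp
        exact (Real.continuous_arctan.tendsto _).comp hx
    have h2 : (∫ _x in (-a)..a, Real.arctan (-lam)) = 2 * a * Real.arctan (-lam) := by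
      rw [intervalIntegral.integral_const, smul_eq_mul]
      ring
    rw [h2] at h1
    have h3 := h1.const_mul (1 / Real.pi)
    have : (1 / Real.pi) * (2 * a * Real.arctan (-lam))
        = -(2 * a / Real.pi) * Real.arctan lam := by
      rw [Real.arctan_neg]; field_simp
    rw [this] at h3
    exact h3
  · intro k lam hk h
    have hπ : (0:ℝ) < Real.pi := Real.pi_pos
    have harctan : Real.arctan lam = -(Real.pi * k / (2 * a)) := by
      field_simp at h ⊢
      nlinarith [h]
    have := Real.tan_arctan lam
    rw [harctan, Real.tan_neg] at this
    linarith [this]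
end
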